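/- arXiv:2203.03494 — 9 statements merged into one kernel-verified Lean document; each statement's English description precedes it below -/
import Mathlib

section
/- Let p ≥ 2 be an integer. For every integer N ≥ 2p+1 there exists a real polynomial g ∈ ℝ[x,y] with non-negative coefficients such that g(x,y) = 1 whenever x + y = 1, every pair (a,b) ∈ ℕ² in the support of g satisfies p ∣ a + b, and the support of g has exactly N elements. -/
open MvPolynomial Finset

private noncomputable def fe (a b : ℕ) : Fin 2 →₀ ℕ :=
  Finsupp.single 0 a + Finsupp.single 1 b

private lemma fe0 (a b : ℕ) : fe a b 0 = a := by
  simp [fe, Finsupp.single_apply]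

private lemma fe1 (a b : ℕ) : fe a b 1 = b := by
  simp [fe, Finsupp.single_apply]

private lemma eval_mono (x y c : ℝ) (a b : ℕ) :
    eval ![x, y] (monomial (fe a b) c) = c * (x ^ a * y ^ b) := by
  rw [eval_monomial, fe]
  rw [Finsupp.prod_add_index' (by simp) (fun a b1 b2 => pow_add _ _ _)]
  rw [Finsupp.prod_single_index (by simp), Finsupp.prod_single_index (by simp)]
  norm_num

private lemma binom_sum (x y : ℝ) (h : x + y = 1) (n : ℕ) :
    ∑ j ∈ Finset.range (n + 1), (n.choose j : ℝ) * (x ^ j * y ^ (n - j)) = 1 := by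
  have := add_pow x y n
  rw [h, one_pow] at this
  rw [this]
  apply Finset.sum_congr rfl
  intro j _
  ring

private theorem key (p k m : ℕ) (hp : 2 ≤ p) (hk : 1 ≤ k) (hm1 : 1 ≤ m) (hmp : m ≤ p) :
    ∃ g : MvPolynomial (Fin 2) ℝ,
      (∀ α, 0 ≤ g.coeff α) ∧
      (∀ x y : ℝ, x + y = 1 → eval ![x, y] g = 1) ∧
      (∀ α ∈ g.support, p ∣ α 0 + α 1) ∧
      g.support.card = p + k * p + m := by
  set K := k * p with hKdef
  have hpK : p ≤ K := by
    calc p = 1 * p := (one_mul p).symm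
    _ ≤ k * p := Nat.mul_le_mul_right p hk
  set D := K + p with hDdef
  -- coefficient function
  set γ : (Fin 2 →₀ ℕ) → ℝ := fun α =>
    if α 0 + α 1 = p then (p.choose (α 0) : ℝ)
    else (if α 0 ≤ K then (K.choose (α 0) : ℝ) else 0)
       + (if m ≤ α 0 then (p.choose m : ℝ) * (K.choose (α 0 - m) : ℝ) else 0)
    with hγdef
  set T1 : Finset (Fin 2 →₀ ℕ) := (Icc 1 p \ {m}).image (fun j => fe j (p - j)) with hT1def
  set T2 : Finset (Fin 2 →₀ ℕ) := (range (K + m + 1)).image (fun s => fe s (D - s)) with hT2def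
  -- membership descriptions
  have memT1 : ∀ α ∈ T1, ∃ j, 1 ≤ j ∧ j ≤ p ∧ j ≠ m ∧ α = fe j (p - j) := by
    intro α hα
    rw [hT1def, mem_image] at hα
    obtain ⟨j, hj, rfl⟩ := hα
    rw [mem_sdiff, mem_Icc] at hj
    exact ⟨j, hj.1.1, hj.1.2, by simpa using hj.2, rfl⟩
  have memT2 : ∀ α ∈ T2, ∃ s, s ≤ K + m ∧ α = fe s (D - s) := by
    intro α hα
    rw [hT2def, mem_image] at hα
    obtain ⟨s, hs, rfl⟩ := hα
    rw [mem_range] at hs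
    exact ⟨s, by omega, rfl⟩
  have degT1 : ∀ α ∈ T1, α 0 + α 1 = p := by
    intro α hα
    obtain ⟨j, h1, h2, _, rfl⟩ := memT1 α hα
    rw [fe0, fe1]; omega
  have degT2 : ∀ α ∈ T2, α 0 + α 1 = D := by
    intro α hα
    obtain ⟨s, hs, rfl⟩ := memT2 α hα
    rw [fe0, fe1]; omega
  have hdisj : Disjoint T1 T2 := by
    rw [Finset.disjoint_left]
    intro α h1 h2
    have e1 := degT1 α h1
    have e2 := degT2 α h2
    omega
  -- positivity of γ on T1 ∪ T2
  have hγpos : ∀ α ∈ T1 ∪ T2, 0 < γ α := by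
    intro α hα
    rw [mem_union] at hα
    rcases hα with hα | hα
    · obtain ⟨j, h1, h2, _, rfl⟩ := memT1 α hα
      rw [hγdef]
      simp only [fe0, fe1]
      rw [if_pos (by omega)]
      exact_mod_cast Nat.choose_pos h2
    · obtain ⟨s, hs, rfl⟩ := memT2 α hα
      rw [hγdef]
      simp only [fe0, fe1]
      rw [if_neg (by omega)]
      by_cases hsK : s ≤ K
      · apply add_pos_of_pos_of_nonneg
        · rw [if_pos hsK]
          exact_mod_cast Nat.choose_pos hsK
        · positivity
      · apply add_pos_of_nonneg_of_pos
        · positivity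
        · rw [if_pos (by omega)]
          have h1 : (0:ℝ) < (p.choose m : ℝ) := by exact_mod_cast Nat.choose_pos hmp
          have h2 : (0:ℝ) < (K.choose (s - m) : ℝ) := by
            exact_mod_cast Nat.choose_pos (by omega)
          exact mul_pos h1 h2
  -- coefficients of the polynomial
  have hcoeff : ∀ β, coeff β (∑ α ∈ T1 ∪ T2, monomial α (γ α)) =
      if β ∈ T1 ∪ T2 then γ β else 0 := by
    intro β
    rw [coeff_sum]
    simp only [coeff_monomial]
    exact Finset.sum_ite_eq' (T1 ∪ T2) β γ
  -- support of the polynomial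
  have hsupp : (∑ α ∈ T1 ∪ T2, monomial α (γ α)).support = T1 ∪ T2 := by
    ext β
    rw [mem_support_iff, hcoeff]
    constructor
    · intro h
      by_contra hβ
      rw [if_neg hβ] at h
      exact h rfl
    · intro hβ
      rw [if_pos hβ]
      exact (hγpos β hβ).ne'
  -- injectivity facts
  have hinj1 : Set.InjOn (fun j => fe j (p - j)) ↑(Icc 1 p \ {m}) := by
    intro a _ b _ hab
    have := congrArg (fun f : Fin 2 →₀ ℕ => f 0) hab
    simpa [fe0] using this
  have hinj2 : Set.InjOn (fun s => fe s (D - s)) ↑(range (K + m + 1)) := by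
    intro a _ b _ hab
    have := congrArg (fun f : Fin 2 →₀ ℕ => f 0) hab
    simpa [fe0] using this
  refine ⟨∑ α ∈ T1 ∪ T2, monomial α (γ α), ?_, ?_, ?_, ?_⟩
  · -- nonneg coefficients
    intro α
    rw [hcoeff]
    split
    · exact (hγpos α ‹_›).le
    · exact le_refl 0
  · -- evaluation on the line
    intro x y hxy
    rw [map_sum, Finset.sum_union hdisj, hT1def, hT2def,
        Finset.sum_image (fun a ha b hb h => hinj1 (by exact_mod_cast ha) (by exact_mod_cast hb) h),
        Finset.sum_image (fun a ha b hb h => hinj2 (by exact_mod_cast ha) (by exact_mod_cast hb) h)]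
    simp only [eval_mono]
    -- simplify the coefficients
    have hA : ∑ j ∈ Icc 1 p \ {m}, γ (fe j (p - j)) * (x ^ j * y ^ (p - j)) =
        ∑ j ∈ Icc 1 p \ {m}, (p.choose j : ℝ) * (x ^ j * y ^ (p - j)) := by
      apply Finset.sum_congr rfl
      intro j hj
      rw [mem_sdiff, mem_Icc] at hj
      rw [hγdef]
      simp only [fe0, fe1]
      rw [if_pos (by omega)]
    have hB : ∑ s ∈ range (K + m + 1), γ (fe s (D - s)) * (x ^ s * y ^ (D - s)) =
        (∑ s ∈ range (K + m + 1),
          (if s ≤ K then (K.choose s : ℝ) else 0) * (x ^ s * y ^ (D - s))) +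
        (∑ s ∈ range (K + m + 1),
          (if m ≤ s then (p.choose m : ℝ) * (K.choose (s - m) : ℝ) else 0) *
            (x ^ s * y ^ (D - s))) := by
      rw [← Finset.sum_add_distrib]
      apply Finset.sum_congr rfl
      intro s hs
      rw [mem_range] at hs
      rw [hγdef]
      simp only [fe0, fe1]
      rw [if_neg (by omega), add_mul]
    rw [hA, hB]
    -- sum over the first layer
    have hIcc : Icc 1 p = insert m (Icc 1 p \ {m}) := by
      rw [Finset.sdiff_singleton_eq_erase, Finset.insert_erase (by rw [mem_Icc]; omega)]
    have hrange : range (p + 1) = insert 0 (Icc 1 p) := by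
      ext j
      simp only [mem_range, mem_insert, mem_Icc]
      omega
    have hfull := binom_sum x y hxy p
    rw [hrange, Finset.sum_insert (by rw [mem_Icc]; omega), hIcc,
        Finset.sum_insert (by rw [mem_sdiff]; intro h; exact h.2 (mem_singleton_self m))] at hfull
    -- sum over the second layer, part 1
    have hB1 : ∑ s ∈ range (K + m + 1),
        (if s ≤ K then (K.choose s : ℝ) else 0) * (x ^ s * y ^ (D - s)) = y ^ p := by
      rw [← Finset.sum_subset (Finset.range_subset_range.mpr (by omega : K + 1 ≤ K + m + 1))
          (fun s _ hs2 => by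
            rw [mem_range, not_lt] at hs2
            rw [if_neg (by omega), zero_mul])]
      calc ∑ s ∈ range (K + 1), (if s ≤ K then (K.choose s : ℝ) else 0) * (x ^ s * y ^ (D - s))
          = ∑ s ∈ range (K + 1), y ^ p * ((K.choose s : ℝ) * (x ^ s * y ^ (K - s))) := by
            apply Finset.sum_congr rfl
            intro s hs
            rw [mem_range] at hs
            rw [if_pos (by omega)]
            have hD : D - s = (K - s) + p := by omega
            rw [hD, pow_add]
            ring
        _ = y ^ p := by rw [← Finset.mul_sum, binom_sum x y hxy K, mul_one]
    -- sum over the second layer, part 2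
    have hB2 : ∑ s ∈ range (K + m + 1),
        (if m ≤ s then (p.choose m : ℝ) * (K.choose (s - m) : ℝ) else 0) *
          (x ^ s * y ^ (D - s)) = (p.choose m : ℝ) * (x ^ m * y ^ (p - m)) := by
      rw [Finset.range_eq_Ico, ← Finset.sum_Ico_consecutive _ (Nat.zero_le m)
          (by omega : m ≤ K + m + 1)]
      have hz : ∑ s ∈ Finset.Ico 0 m,
          (if m ≤ s then (p.choose m : ℝ) * (K.choose (s - m) : ℝ) else 0) *
            (x ^ s * y ^ (D - s)) = 0 := by
        apply Finset.sum_eq_zero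
        intro s hs
        rw [Finset.mem_Ico] at hs
        rw [if_neg (by omega), zero_mul]
      rw [hz, zero_add, Finset.sum_Ico_eq_sum_range]
      have hKm : K + m + 1 - m = K + 1 := by omega
      rw [hKm]
      calc ∑ i ∈ range (K + 1),
          (if m ≤ m + i then (p.choose m : ℝ) * (K.choose (m + i - m) : ℝ) else 0) *
            (x ^ (m + i) * y ^ (D - (m + i)))
          = ∑ i ∈ range (K + 1),
            ((p.choose m : ℝ) * (x ^ m * y ^ (p - m))) *
            ((K.choose i : ℝ) * (x ^ i * y ^ (K - i))) := by
            apply Finset.sum_congr rfl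
            intro i hi
            rw [mem_range] at hi
            rw [if_pos (by omega)]
            have e1 : m + i - m = i := by omega
            have e2 : D - (m + i) = (p - m) + (K - i) := by omega
            have e3 : m + i = m + i := rfl
            rw [e1, e2, pow_add, pow_add]
            ring
        _ = (p.choose m : ℝ) * (x ^ m * y ^ (p - m)) := by
            rw [← Finset.mul_sum, binom_sum x y hxy K, mul_one]
    rw [hB1, hB2]
    have hterm0 : (p.choose 0 : ℝ) * (x ^ 0 * y ^ (p - 0)) = y ^ p := by
      simp
    rw [hterm0] at hfull
    linarith
  · -- divisibility
    intro α hα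
    rw [hsupp, mem_union] at hα
    rcases hα with hα | hα
    · rw [degT1 α hα]
    · rw [degT2 α hα]
      exact ⟨k + 1, by ring⟩
  · -- cardinality
    rw [hsupp, Finset.card_union_of_disjoint hdisj, hT1def, hT2def,
        Finset.card_image_of_injOn hinj1, Finset.card_image_of_injOn hinj2,
        Finset.card_sdiff_of_subset (by simp only [Finset.singleton_subset_iff, mem_Icc]; omega),
        Nat.card_Icc, Finset.card_singleton, Finset.card_range]
    omega

/-- For every `p ≥ 2` and every `N ≥ 2p+1`, there is a real polynomial in two
variables with non-negative coefficients, equal to `1` on the line `x + y = 1`,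
whose support consists of pairs `(a,b)` with `p ∣ a + b`, and whose support has
exactly `N` elements. -/
theorem stmt_0 (p : ℕ) (hp : 2 ≤ p) (N : ℕ) (hN : 2 * p + 1 ≤ N) :
    ∃ g : MvPolynomial (Fin 2) ℝ,
      (∀ α, 0 ≤ g.coeff α) ∧
      (∀ x y : ℝ, x + y = 1 → eval ![x, y] g = 1) ∧
      (∀ α ∈ g.support, p ∣ α 0 + α 1) ∧
      g.support.card = N := by
  set M := N - (p + 1) with hMdef
  have hpM : p ≤ M := by omega
  set q := M / p with hqdef
  set r := M % p with hrdef
  have hdm : p * q + r = M := Nat.div_add_mod M p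
  have hrp : r < p := Nat.mod_lt _ (by omega)
  have hq1 : 1 ≤ q := (Nat.one_le_div_iff (by omega)).mpr hpM
  obtain ⟨g, h1, h2, h3, h4⟩ := key p q (r + 1) hp hq1 (by omega) (by omega)
  refine ⟨g, h1, h2, h3, ?_⟩
  rw [h4]
  have hcomm : q * p = p * q := Nat.mul_comm q p
  rw [hcomm]
  set t := p * q with htdef
  omega
end

section
/- Let p ≥ 3 be an odd integer. For every integer N ≥ p+2 there exists a real polynomial g ∈ ℝ[x,y] with non-negative coefficients such that g(x,y) = 1 whenever x + y = 1, every pair (a,b) ∈ ℕ² in the support of g satisfies p ∣ a + 2b, and the support of g has exactly N elements. -/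
/-!
Call a polynomial with nonnegative coefficients, equal to `1` on `x + y = 1` and supported on
exponents `(a, b)` with `p ∣ a + 2b`, a solution, and the size of its support its rank.
Write `p = 2q + 1`. The bivariate Lucas polynomial `f = L_p` (`L_{n+2} = x L_{n+1} + y L_n`) has
positive coefficients exactly at the exponents `(p - 2t, t)`, `t ≤ q`, and equals
`1 + (x - 1)^p = 1 - y^p` on `x + y = 1`; so `f + y^p` is a solution of rank `q + 2`.

Multiplying some terms of a solution by `f + y^p` gives again a solution. Applied to the terms
`x^{p-2t} y^t`, `t ≤ d ≤ q`, of `f + y^p` itself, the products with `f` overlap and fill exactly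
the exponents of weight `2p` and `y`-degree `≤ q + d`, which gives rank `p + 2 + d`. The map
`g ↦ f + y^p g` raises the rank by `q + 1`, so every rank `≥ p + 2` is reached.

All exponents involved have weight `a + 2b ∈ {p, 2p, 3p, …}`, and an exponent of given weight is
determined by `b`: supports are counted through `b`.
-/

open MvPolynomial Finset
open scoped Pointwise

theorem Finset.range_add_one_add_range_add_one (a b : ℕ) :
    range (a + 1) + range (b + 1) = range (a + b + 1) := by
  ext s
  simp only [mem_add, mem_range]
  constructor
  · rintro ⟨t, ht, u, hu, rfl⟩
    omega
  · intro hs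
    exact ⟨min s a, by omega, s - min s a, by omega, by omega⟩

namespace MvPolynomial

section Restrict

variable {σ R : Type*} [CommSemiring R]

noncomputable def restrict (S : (σ →₀ ℕ) → Prop) [DecidablePred S] (P : MvPolynomial σ R) :
    MvPolynomial σ R :=
  ∑ α ∈ P.support with S α, monomial α (coeff α P)

variable (S : (σ →₀ ℕ) → Prop) [DecidablePred S]

theorem coeff_restrict (P : MvPolynomial σ R) (β : σ →₀ ℕ) :
    coeff β (P.restrict S) = if S β then coeff β P else 0 := by
  classical
  rw [restrict, coeff_sum]
  simp only [coeff_monomial]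
  rw [Finset.sum_ite_eq']
  by_cases h : S β <;> by_cases h' : coeff β P = 0 <;> simp [h, h']

theorem support_restrict (P : MvPolynomial σ R) : (P.restrict S).support = P.support.filter S := by
  ext β
  simp only [mem_support_iff, coeff_restrict, mem_filter]
  split_ifs <;> simp [*]

theorem restrict_add_restrict_not (P : MvPolynomial σ R) :
    P.restrict S + P.restrict (¬ S ·) = P := by
  ext β
  simp only [coeff_add, coeff_restrict]
  split_ifs <;> simp_all

theorem IsWeightedHomogeneous.restrict {M : Type*} [AddCommMonoid M] {w : σ → M} {m : M}
    {P : MvPolynomial σ R} (hP : IsWeightedHomogeneous w P m) :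
    IsWeightedHomogeneous w (P.restrict S) m := fun α hα =>
  hP fun h => hα (by rw [coeff_restrict, h, ite_self])

theorem coeff_restrict_nonneg [Preorder R] {P : MvPolynomial σ R} (hP : ∀ α, 0 ≤ coeff α P)
    (α : σ →₀ ℕ) : 0 ≤ coeff α (P.restrict S) := by
  rw [coeff_restrict]
  split_ifs
  exacts [hP α, le_rfl]

end Restrict

section Support

variable {σ R : Type*} [CommSemiring R]

theorem support_X_pow_mul (i : σ) (n : ℕ) (P : MvPolynomial σ R) :
    (X i ^ n * P).support = P.support.map (addLeftEmbedding (Finsupp.single i n)) := by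
  rw [X_pow_eq_monomial]
  exact AddMonoidAlgebra.support_coeff_single_mul P _ (by simp) _

theorem IsWeightedHomogeneous.disjoint_support {M : Type*} [AddCommMonoid M] {w : σ → M}
    {P Q : MvPolynomial σ R} {m n : M} (hP : IsWeightedHomogeneous w P m)
    (hQ : IsWeightedHomogeneous w Q n) (h : m ≠ n) : Disjoint P.support Q.support :=
  disjoint_left.2 fun _ hα hα' =>
    h ((hP (mem_support_iff.1 hα)).symm.trans (hQ (mem_support_iff.1 hα')))

end Support

section NonnegCoeff

variable {σ R : Type*} [CommSemiring R] [PartialOrder R] [IsOrderedRing R]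
  {P Q : MvPolynomial σ R}

theorem coeff_mul_nonneg (hP : ∀ α, 0 ≤ coeff α P) (hQ : ∀ α, 0 ≤ coeff α Q) (α : σ →₀ ℕ) :
    0 ≤ coeff α (P * Q) := by
  classical
  rw [coeff_mul]
  exact sum_nonneg fun x _ => mul_nonneg (hP _) (hQ _)

theorem coeff_X_pow_nonneg (i : σ) (n : ℕ) (α : σ →₀ ℕ) :
    0 ≤ coeff α (X i ^ n : MvPolynomial σ R) := by
  classical
  rw [coeff_X_pow]
  split_ifs <;> norm_num

theorem support_add_of_coeff_nonneg [DecidableEq σ] (hP : ∀ α, 0 ≤ coeff α P)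
    (hQ : ∀ α, 0 ≤ coeff α Q) : (P + Q).support = P.support ∪ Q.support := by
  ext α
  simp only [mem_union, mem_support_iff, coeff_add, Ne,
    add_eq_zero_iff_of_nonneg (hP α) (hQ α), not_and_or]

end NonnegCoeff

theorem support_mul_of_coeff_nonneg {σ R : Type*} [CommSemiring R] [PartialOrder R]
    [IsStrictOrderedRing R] [DecidableEq σ] {P Q : MvPolynomial σ R} (hP : ∀ α, 0 ≤ coeff α P)
    (hQ : ∀ α, 0 ≤ coeff α Q) : (P * Q).support = P.support + Q.support := by
  refine (support_mul P Q).antisymm fun γ hγ => ?_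
  obtain ⟨α, hα, β, hβ, rfl⟩ := mem_add.1 hγ
  rw [mem_support_iff] at hα hβ ⊢
  rw [coeff_mul]
  refine (sum_pos' (fun x _ => mul_nonneg (hP _) (hQ _))
    ⟨(α, β), mem_antidiagonal.2 rfl, ?_⟩).ne'
  exact mul_pos ((hP α).lt_of_ne' hα) ((hQ β).lt_of_ne' hβ)

end MvPolynomial

section WeightOneTwo

theorem Finsupp.weight_one_two (α : Fin 2 →₀ ℕ) :
    Finsupp.weight ![1, 2] α = α 0 + 2 * α 1 := by
  simp [Finsupp.weight_apply, Finsupp.sum_fintype, Fin.sum_univ_two, mul_comm]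

theorem Finsupp.injOn_apply_one (n : ℕ) :
    Set.InjOn (· 1) {α : Fin 2 →₀ ℕ | α 0 + 2 * α 1 = n} := by
  intro α (hα : _ = n) β (hβ : _ = n) (h : α 1 = β 1)
  ext i
  fin_cases i
  · change α 0 = β 0
    omega
  · exact h

theorem Finsupp.exists_weight_eq_apply_one_eq {n s : ℕ} (hs : 2 * s ≤ n) :
    ∃ α : Fin 2 →₀ ℕ, α 0 + 2 * α 1 = n ∧ α 1 = s :=
  ⟨Finsupp.single 0 (n - 2 * s) + Finsupp.single 1 s, by simp; omega, by simp⟩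

theorem MvPolynomial.isWeightedHomogeneous_X_one_pow (R : Type*) [CommSemiring R] (n : ℕ) :
    IsWeightedHomogeneous ![1, 2] (X 1 ^ n : MvPolynomial (Fin 2) R) (2 * n) := by
  convert (isWeightedHomogeneous_X R ![1, 2] 1).pow n using 1
  simp [mul_comm]

variable {R : Type*} [CommSemiring R] {P : MvPolynomial (Fin 2) R} {n : ℕ}

theorem MvPolynomial.IsWeightedHomogeneous.weight_eq_of_mem_support
    (hP : IsWeightedHomogeneous ![1, 2] P n) {α : Fin 2 →₀ ℕ} (hα : α ∈ P.support) :
    α 0 + 2 * α 1 = n :=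
  Finsupp.weight_one_two α ▸ hP (mem_support_iff.1 hα)

theorem MvPolynomial.IsWeightedHomogeneous.card_image_apply_one_support
    (hP : IsWeightedHomogeneous ![1, 2] P n) : (P.support.image (· 1)).card = P.support.card :=
  card_image_of_injOn fun _ hα _ hβ h =>
    Finsupp.injOn_apply_one n (hP.weight_eq_of_mem_support hα) (hP.weight_eq_of_mem_support hβ) h

end WeightOneTwo

section Lucas

noncomputable def lucasPoly (R : Type*) [CommSemiring R] : ℕ → MvPolynomial (Fin 2) R
  | 0 => 2
  | 1 => X 0
  | n + 2 => X 0 * lucasPoly R (n + 1) + X 1 * lucasPoly R n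

theorem eval_lucasPoly {R : Type*} [CommRing R] {x y : R} (h : x + y = 1) :
    ∀ n, eval ![x, y] (lucasPoly R n) = 1 + (x - 1) ^ n
  | 0 => by norm_num [lucasPoly]
  | 1 => by simp [lucasPoly]
  | n + 2 => by
    simp only [lucasPoly, map_add, map_mul, eval_X, eval_lucasPoly h (n + 1),
      eval_lucasPoly h n, Matrix.cons_val_zero, Matrix.cons_val_one]
    linear_combination (1 + (x - 1) ^ n) * h

theorem eval_lucasPoly_of_odd {R : Type*} [CommRing R] {p : ℕ} (hp : Odd p) {x y : R}
    (h : x + y = 1) : eval ![x, y] (lucasPoly R p) = 1 - y ^ p := by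
  rw [eval_lucasPoly h, show x - 1 = -y by linear_combination h, hp.neg_pow]
  ring

theorem isWeightedHomogeneous_lucasPoly (R : Type*) [CommSemiring R] :
    ∀ n, IsWeightedHomogeneous ![1, 2] (lucasPoly R n) n
  | 0 => by rw [lucasPoly, ← map_ofNat C 2]; exact isWeightedHomogeneous_C _ _
  | 1 => isWeightedHomogeneous_X R ![1, 2] 0
  | n + 2 => by
    have h0 := (isWeightedHomogeneous_X R ![1, 2] 0).mul (isWeightedHomogeneous_lucasPoly R (n + 1))
    have h1 := (isWeightedHomogeneous_X R ![1, 2] 1).mul (isWeightedHomogeneous_lucasPoly R n)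
    simp only [Matrix.cons_val_zero, Matrix.cons_val_one] at h0 h1
    exact (add_comm 1 (n + 1) ▸ h0).add (add_comm 2 n ▸ h1)

variable {R : Type*} [CommSemiring R] [PartialOrder R] [IsStrictOrderedRing R]

theorem coeff_lucasPoly_nonneg : ∀ n (α : Fin 2 →₀ ℕ), 0 ≤ coeff α (lucasPoly R n)
  | 0, α => by rw [lucasPoly, ← map_ofNat C 2, coeff_C]; split_ifs <;> norm_num
  | 1, α => by rw [lucasPoly, coeff_X]; split_ifs <;> norm_num
  | n + 2, α => by
    rw [lucasPoly, coeff_add, coeff_X_mul', coeff_X_mul']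
    refine add_nonneg ?_ ?_ <;> split_ifs
    exacts [coeff_lucasPoly_nonneg _ _, le_rfl, coeff_lucasPoly_nonneg _ _, le_rfl]

theorem coeff_lucasPoly_pos :
    ∀ n (α : Fin 2 →₀ ℕ), α 0 + 2 * α 1 = n → 0 < coeff α (lucasPoly R n)
  | 0, α, h => by
    obtain rfl : α = 0 := Finsupp.injOn_apply_one 0 h (by simp) (by simp; omega)
    rw [lucasPoly, ← map_ofNat C 2, coeff_C, if_pos rfl]
    exact two_pos
  | 1, α, h => by
    obtain rfl : α = Finsupp.single 0 1 :=
      Finsupp.injOn_apply_one 1 h (by simp) (by simp; omega)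
    rw [lucasPoly, coeff_X_same]
    exact one_pos
  | n + 2, α, h => by
    rw [lucasPoly, coeff_add, coeff_X_mul', coeff_X_mul']
    by_cases h0 : α 0 = 0
    · rw [if_pos (by simp; omega : (1 : Fin 2) ∈ α.support)]
      refine add_pos_of_nonneg_of_pos ?_ (coeff_lucasPoly_pos n _ (by simp; omega))
      split_ifs
      exacts [coeff_lucasPoly_nonneg _ _, le_rfl]
    · rw [if_pos (by simpa using h0 : (0 : Fin 2) ∈ α.support)]
      refine add_pos_of_pos_of_nonneg (coeff_lucasPoly_pos (n + 1) _ (by simp; omega)) ?_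
      split_ifs
      exacts [coeff_lucasPoly_nonneg _ _, le_rfl]

theorem mem_support_lucasPoly {n : ℕ} {α : Fin 2 →₀ ℕ} :
    α ∈ (lucasPoly R n).support ↔ α 0 + 2 * α 1 = n :=
  ⟨(isWeightedHomogeneous_lucasPoly R n).weight_eq_of_mem_support,
    fun h => mem_support_iff.2 (coeff_lucasPoly_pos n α h).ne'⟩

theorem image_apply_one_support_restrict_lucasPoly {n d : ℕ} (hd : d ≤ n / 2) :
    ((lucasPoly R n).restrict (· 1 ≤ d)).support.image (· 1) = range (d + 1) := by
  ext s
  simp only [mem_image, support_restrict, mem_filter, mem_support_lucasPoly, mem_range]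
  constructor
  · rintro ⟨α, ⟨-, h⟩, rfl⟩
    omega
  · intro hs
    obtain ⟨α, hα, rfl⟩ := Finsupp.exists_weight_eq_apply_one_eq (n := n) (s := s) (by omega)
    exact ⟨α, ⟨hα, by omega⟩, rfl⟩

theorem image_apply_one_support_lucasPoly (n : ℕ) :
    (lucasPoly R n).support.image (· 1) = range (n / 2 + 1) := by
  rw [← image_apply_one_support_restrict_lucasPoly (R := R) le_rfl, support_restrict]
  congr 1
  ext α
  simp only [mem_filter, mem_support_lucasPoly, iff_self_and]
  omega

theorem card_support_lucasPoly (n : ℕ) : (lucasPoly R n).support.card = n / 2 + 1 := by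
  rw [← (isWeightedHomogeneous_lucasPoly R n).card_image_apply_one_support,
    image_apply_one_support_lucasPoly, card_range]

theorem image_apply_one_support_restrict_mul_lucasPoly {n d : ℕ} (hd : d ≤ n / 2) :
    ((lucasPoly R n).restrict (· 1 ≤ d) * lucasPoly R n).support.image (· 1)
      = range (d + n / 2 + 1) := by
  rw [support_mul_of_coeff_nonneg (coeff_restrict_nonneg _ (coeff_lucasPoly_nonneg n))
      (coeff_lucasPoly_nonneg n),
    show (fun α : Fin 2 →₀ ℕ => α 1) = Finsupp.applyAddHom 1 from rfl, image_add,
    show ⇑(Finsupp.applyAddHom (M := ℕ) (1 : Fin 2)) = fun α => α 1 from rfl,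
    image_apply_one_support_restrict_lucasPoly hd, image_apply_one_support_lucasPoly,
    range_add_one_add_range_add_one]

end Lucas

/-- Under `x = |z|²`, `y = |w|²` these are the `Γ(p,2)`-invariant monomial sphere maps, whose
embedding dimension is the rank of the support. -/
structure IsInvariantSpherePoly (p : ℕ) (g : MvPolynomial (Fin 2) ℝ) : Prop where
  coeff_nonneg : ∀ α, 0 ≤ coeff α g
  eval_eq_one : ∀ x y : ℝ, x + y = 1 → eval ![x, y] g = 1
  dvd : ∀ α ∈ g.support, p ∣ α 0 + 2 * α 1

section Construction

variable {p : ℕ}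

theorem support_lucasPoly_add_X_pow_mul {g : MvPolynomial (Fin 2) ℝ} (hg : ∀ α, 0 ≤ coeff α g) :
    (lucasPoly ℝ p + X 1 ^ p * g).support = (lucasPoly ℝ p).support ∪ (X 1 ^ p * g).support :=
  support_add_of_coeff_nonneg (coeff_lucasPoly_nonneg p)
    (coeff_mul_nonneg (coeff_X_pow_nonneg 1 p) hg)

theorem IsInvariantSpherePoly.lucasPoly_add_X_pow_mul (hp : Odd p) {g : MvPolynomial (Fin 2) ℝ}
    (hg : IsInvariantSpherePoly p g) : IsInvariantSpherePoly p (lucasPoly ℝ p + X 1 ^ p * g) where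
  coeff_nonneg α := add_nonneg (coeff_lucasPoly_nonneg p α)
    (coeff_mul_nonneg (coeff_X_pow_nonneg 1 p) hg.coeff_nonneg α)
  eval_eq_one x y h := by
    simp [eval_lucasPoly_of_odd hp h, hg.eval_eq_one x y h]
  dvd α hα := by
    rw [support_lucasPoly_add_X_pow_mul hg.coeff_nonneg, mem_union, mem_support_lucasPoly,
      support_X_pow_mul, mem_map] at hα
    rcases hα with hα | ⟨β, hβ, rfl⟩
    · rw [hα]
    · simpa [mul_add, add_comm, add_left_comm] using (hg.dvd β hβ).add (dvd_mul_left p 2)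

theorem card_support_lucasPoly_add_X_pow_mul (hp : Odd p) {g : MvPolynomial (Fin 2) ℝ}
    (hg : ∀ α, 0 ≤ coeff α g) :
    (lucasPoly ℝ p + X 1 ^ p * g).support.card = p / 2 + 1 + g.support.card := by
  rw [support_lucasPoly_add_X_pow_mul hg, support_X_pow_mul, card_union_of_disjoint,
    card_support_lucasPoly, card_map]
  refine disjoint_left.2 fun α hα hα' => ?_
  obtain ⟨β, -, rfl⟩ := mem_map.1 hα'
  rw [mem_support_lucasPoly] at hα
  have := hp.pos
  simp at hα
  omega

/-- `f + y^p` with its terms of `y`-degree `≤ d` multiplied by `f + y^p`, where `f = L_p`. -/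
noncomputable def partialTensor (p d : ℕ) : MvPolynomial (Fin 2) ℝ :=
  (lucasPoly ℝ p).restrict (fun α => ¬ α 1 ≤ d)
    + (lucasPoly ℝ p).restrict (· 1 ≤ d) * lucasPoly ℝ p
    + X 1 ^ p * (lucasPoly ℝ p).restrict (· 1 ≤ d) + X 1 ^ p

theorem support_partialTensor (d : ℕ) :
    (partialTensor p d).support =
      ((lucasPoly ℝ p).restrict (fun α => ¬ α 1 ≤ d)).support
        ∪ ((lucasPoly ℝ p).restrict (· 1 ≤ d) * lucasPoly ℝ p).support
        ∪ (X 1 ^ p * (lucasPoly ℝ p).restrict (· 1 ≤ d)).support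
        ∪ (X 1 ^ p : MvPolynomial (Fin 2) ℝ).support := by
  have hf := coeff_lucasPoly_nonneg (R := ℝ) p
  have hA := coeff_restrict_nonneg (fun α => ¬ α 1 ≤ d) hf
  have hB := coeff_mul_nonneg (coeff_restrict_nonneg (· 1 ≤ d) hf) hf
  have hC := coeff_mul_nonneg (coeff_X_pow_nonneg 1 p) (coeff_restrict_nonneg (· 1 ≤ d) hf)
  rw [partialTensor, support_add_of_coeff_nonneg
      (fun α => add_nonneg (add_nonneg (hA α) (hB α)) (hC α)) (coeff_X_pow_nonneg 1 p),
    support_add_of_coeff_nonneg (fun α => add_nonneg (hA α) (hB α)) hC,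
    support_add_of_coeff_nonneg hA hB]

theorem isInvariantSpherePoly_partialTensor (hp : Odd p) (d : ℕ) :
    IsInvariantSpherePoly p (partialTensor p d) where
  coeff_nonneg α := by
    have hf := coeff_lucasPoly_nonneg (R := ℝ) p
    have hle := coeff_restrict_nonneg (· 1 ≤ d) hf
    simp only [partialTensor, coeff_add]
    exact add_nonneg (add_nonneg (add_nonneg (coeff_restrict_nonneg _ hf α)
      (coeff_mul_nonneg hle hf α)) (coeff_mul_nonneg (coeff_X_pow_nonneg 1 p) hle α))
      (coeff_X_pow_nonneg 1 p α)
  eval_eq_one x y h := by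
    have hsplit := congrArg (eval ![x, y]) (restrict_add_restrict_not (· 1 ≤ d) (lucasPoly ℝ p))
    rw [map_add, eval_lucasPoly_of_odd hp h] at hsplit
    simp only [partialTensor, map_add, map_mul, map_pow, eval_X, eval_lucasPoly_of_odd hp h,
      Matrix.cons_val_one, Matrix.cons_val_zero]
    linear_combination hsplit
  dvd α hα := by
    have hf := isWeightedHomogeneous_lucasPoly ℝ p
    have hY := isWeightedHomogeneous_X_one_pow ℝ p
    simp only [support_partialTensor, mem_union] at hα
    rcases hα with ((hα | hα) | hα) | hα
    · exact ⟨1, by rw [(hf.restrict _).weight_eq_of_mem_support hα, mul_one]⟩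
    · exact ⟨2, by rw [((hf.restrict _).mul hf).weight_eq_of_mem_support hα]; ring⟩
    · exact ⟨3, by rw [(hY.mul (hf.restrict _)).weight_eq_of_mem_support hα]; ring⟩
    · exact ⟨2, by rw [hY.weight_eq_of_mem_support hα, mul_comm]⟩

theorem card_support_partialTensor (hp : Odd p) {d : ℕ} (hd : d ≤ p / 2) :
    (partialTensor p d).support.card = p + 2 + d := by
  have hp2 : 2 * (p / 2) + 1 = p := by have := Nat.odd_iff.1 hp; omega
  have hf := isWeightedHomogeneous_lucasPoly ℝ p
  have hY := isWeightedHomogeneous_X_one_pow ℝ p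
  have hA := hf.restrict (fun α => ¬ α 1 ≤ d)
  have hB := (hf.restrict (· 1 ≤ d)).mul hf
  have hC := hY.mul (hf.restrict (· 1 ≤ d))
  have hB_lt : ∀ α ∈ ((lucasPoly ℝ p).restrict (· 1 ≤ d) * lucasPoly ℝ p).support, α 1 < p :=
    fun α hα => by
      have := mem_image_of_mem (· 1) hα
      rw [image_apply_one_support_restrict_mul_lucasPoly hd, mem_range] at this
      omega
  have hB_card : ((lucasPoly ℝ p).restrict (· 1 ≤ d) * lucasPoly ℝ p).support.card
      = d + p / 2 + 1 := by
    rw [← hB.card_image_apply_one_support, image_apply_one_support_restrict_mul_lucasPoly hd,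
      card_range]
  have hAC := card_filter_add_card_filter_not (s := (lucasPoly ℝ p).support) (· 1 ≤ d)
  rw [card_support_lucasPoly, ← support_restrict, ← support_restrict] at hAC
  rw [support_partialTensor, card_union_of_disjoint, card_union_of_disjoint,
    card_union_of_disjoint, hB_card, support_X_pow_mul, card_map, support_X_pow, card_singleton]
  · omega
  · exact hA.disjoint_support hB (by omega)
  · exact disjoint_union_left.2 ⟨hA.disjoint_support hC (by omega),
      hB.disjoint_support hC (by omega)⟩
  · refine disjoint_union_left.2 ⟨disjoint_union_left.2 ⟨hA.disjoint_support hY (by omega), ?_⟩,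
      hC.disjoint_support hY (by omega)⟩
    rw [support_X_pow]
    exact disjoint_singleton_right.2 fun h => (hB_lt _ h).ne (by simp)

end Construction

theorem exists_isInvariantSpherePoly_card {p : ℕ} (hp : Odd p) {d : ℕ} (hd : d ≤ p / 2) :
    ∀ B : ℕ, ∃ g, IsInvariantSpherePoly p g ∧ g.support.card = p + 2 + d + B * (p / 2 + 1)
  | 0 => ⟨partialTensor p d, isInvariantSpherePoly_partialTensor hp d,
      by rw [card_support_partialTensor hp hd, zero_mul, add_zero]⟩
  | B + 1 => by
    obtain ⟨g, hg, hcard⟩ := exists_isInvariantSpherePoly_card hp hd B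
    refine ⟨_, hg.lucasPoly_add_X_pow_mul hp, ?_⟩
    rw [card_support_lucasPoly_add_X_pow_mul hp hg.coeff_nonneg, hcard]
    ring

theorem stmt_1_general (p : ℕ) (hodd : Odd p) (N : ℕ) (hN : p + 2 ≤ N) :
    ∃ g : MvPolynomial (Fin 2) ℝ,
      (∀ α, 0 ≤ g.coeff α) ∧
      (∀ x y : ℝ, x + y = 1 → eval ![x, y] g = 1) ∧
      (∀ α ∈ g.support, p ∣ α 0 + 2 * α 1) ∧
      g.support.card = N := by
  have hd : (N - (p + 2)) % (p / 2 + 1) ≤ p / 2 := Nat.lt_succ_iff.1 (Nat.mod_lt _ (by omega))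
  obtain ⟨g, hg, hcard⟩ :=
    exists_isInvariantSpherePoly_card hodd hd ((N - (p + 2)) / (p / 2 + 1))
  refine ⟨g, hg.coeff_nonneg, hg.eval_eq_one, hg.dvd, ?_⟩
  have := Nat.mod_add_div' (N - (p + 2)) (p / 2 + 1)
  omega

/-- For every odd `p ≥ 3` and every `N ≥ p+2`, there is a real polynomial in two
variables with non-negative coefficients, equal to `1` on the line `x + y = 1`,
whose support consists of pairs `(a,b)` with `p ∣ a + 2b`, and whose support has
exactly `N` elements. -/
theorem stmt_1 (p : ℕ) (hp : 3 ≤ p) (hodd : Odd p) (N : ℕ) (hN : p + 2 ≤ N) :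
    ∃ g : MvPolynomial (Fin 2) ℝ,
      (∀ α, 0 ≤ g.coeff α) ∧
      (∀ x y : ℝ, x + y = 1 → eval ![x, y] g = 1) ∧
      (∀ α ∈ g.support, p ∣ α 0 + 2 * α 1) ∧
      g.support.card = N :=
  stmt_1_general p hodd N hN
end

section
/- Let n ≥ 2 and p ≥ 2 be integers and set M = C(p+n−1, n−1) (a binomial coefficient), which is the number of monomials of (x₁ + ⋯ + xₙ)^p. For every integer N ≥ M² − 2M + 2 there exists a real polynomial g ∈ ℝ[x₁,…,xₙ] with non-negative coefficients such that g(x) = 1 whenever x₁ + ⋯ + xₙ = 1, every multi-index α ∈ ℕⁿ in the support of g satisfies p ∣ (α₁ + ⋯ + αₙ), and the support of g has exactly N elements. -/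
/-!
Start from `g = 1` and repeatedly pick a monomial `u` of maximal degree `m`, with coefficient
`c > 0`, and replace `a • xᵘ` by `a • xᵘ (x₁ + ⋯ + xₙ)ᵖ`, where `a = c` or `a = c / 2`. This does
not change `g` on the hyperplane `∑ xᵢ = 1` and keeps the coefficients non-negative and the degrees
divisible by `p`. The new monomials all have degree `m + p`, above every old one, so the rank grows
by `M - 1` when `a = c` (the monomial `xᵘ` disappears) and by `M` when `a = c / 2`. After `K`
steps, `j ≤ K` of them halving, the rank is `1 + K (M - 1) + j`, and every `N ≥ (M - 1)² + 1` is of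
this form.
-/

open MvPolynomial Finset

section Monomial

variable {σ R : Type*} [CommRing R] {g : MvPolynomial σ R} {u : σ →₀ ℕ} {a : R}

def IsTopMonomial (g : MvPolynomial σ R) (u : σ →₀ ℕ) : Prop :=
  u ∈ g.support ∧ ∀ α ∈ g.support, α.degree ≤ u.degree

lemma degree_le_of_mem_support_sub_monomial (htop : ∀ α ∈ g.support, α.degree ≤ u.degree)
    {α : σ →₀ ℕ} (hα : α ∈ (g - monomial u a).support) : α.degree ≤ u.degree := by
  classical
  rcases mem_union.mp (support_sub _ _ _ hα) with hg | hu
  · exact htop α hg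
  · rw [mem_singleton.mp (support_monomial_subset hu)]

variable [DecidableEq σ]

lemma support_sub_monomial_coeff : (g - monomial u (g.coeff u)).support = g.support.erase u := by
  ext α
  by_cases h : α = u
  · simp [h]
  · simp [h, coeff_monomial, Ne.symm h]

lemma support_sub_monomial_of_ne (ha : a ≠ g.coeff u) :
    (g - monomial u a).support = insert u g.support := by
  ext α
  by_cases h : α = u
  · simp [h, sub_eq_zero, Ne.symm ha]
  · simp [h, coeff_monomial, Ne.symm h]

end Monomial

variable {σ : Type*} [Fintype σ]

/-- Under `xⱼ = |zⱼ|²`, these are the polynomials of the monomial CR maps of spheres invariant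
under `⟨ω Iₙ⟩`, `ω` a primitive `p`-th root of unity; the rank of the map is `#g.support`. -/
structure IsInvariantCR (p : ℕ) (g : MvPolynomial σ ℝ) : Prop where
  coeff_nonneg : ∀ α, 0 ≤ g.coeff α
  eval_eq_one : ∀ x : σ → ℝ, ∑ i, x i = 1 → eval x g = 1
  dvd_degree : ∀ α ∈ g.support, p ∣ α.degree

lemma isInvariantCR_one (p : ℕ) : IsInvariantCR p (1 : MvPolynomial σ ℝ) where
  coeff_nonneg α := by
    classical
    rw [coeff_one]
    split_ifs <;> norm_num
  eval_eq_one _ _ := map_one _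
  dvd_degree α hα := by
    rw [support_one, mem_singleton] at hα
    simp [hα]

section SumXPow

variable (p : ℕ)

lemma coeff_sum_X_pow_nonneg (α : σ →₀ ℕ) :
    0 ≤ coeff α ((∑ i, X i : MvPolynomial σ ℝ) ^ p) := by
  rw [coeff_sum_X_pow_of_fintype]
  split_ifs <;> positivity

variable {p} in
lemma mem_support_sum_X_pow {α : σ →₀ ℕ} :
    α ∈ ((∑ i, X i : MvPolynomial σ ℝ) ^ p).support ↔ α.degree = p := by
  rw [mem_support_iff, coeff_sum_X_pow_of_fintype, Finsupp.multinomial_eq]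
  split_ifs with h
  · exact iff_of_true (Nat.cast_ne_zero.mpr (Nat.multinomial_pos _ _).ne') h
  · exact iff_of_false (by simp) h

lemma card_support_sum_X_pow :
    #((∑ i, X i : MvPolynomial σ ℝ) ^ p).support = (Fintype.card σ + p - 1).choose p := by
  classical
  rw [← card_univ, ← card_finsuppAntidiag_nat_eq_choose]
  congr 1
  ext α
  rw [mem_support_sum_X_pow, Finsupp.degree_eq_sum]
  simp

end SumXPow

section ExpandMonomial

variable (p : ℕ) (u : σ →₀ ℕ) (a : ℝ) (g : MvPolynomial σ ℝ)

noncomputable def expandMonomial : MvPolynomial σ ℝ :=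
  g - monomial u a + monomial u a * (∑ i, X i) ^ p

lemma eval_expandMonomial {x : σ → ℝ} (hx : ∑ i, x i = 1) :
    eval x (expandMonomial p u a g) = eval x g := by
  simp [expandMonomial, hx]

variable {p u a g}

lemma support_monomial_mul_sum_X_pow (ha : a ≠ 0) :
    (monomial u a * (∑ i, X i : MvPolynomial σ ℝ) ^ p).support
      = ((∑ i, X i : MvPolynomial σ ℝ) ^ p).support.map (addLeftEmbedding u) :=
  AddMonoidAlgebra.support_coeff_single_mul _ _ (by simp [ha]) u

lemma degree_of_mem_support_monomial_mul_sum_X_pow (ha : a ≠ 0) {α : σ →₀ ℕ}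
    (hα : α ∈ (monomial u a * (∑ i, X i : MvPolynomial σ ℝ) ^ p).support) :
    α.degree = u.degree + p := by
  rw [support_monomial_mul_sum_X_pow ha, mem_map] at hα
  obtain ⟨γ, hγ, rfl⟩ := hα
  rw [addLeftEmbedding_apply, map_add, mem_support_sum_X_pow.mp hγ]

lemma IsInvariantCR.expandMonomial (hg : IsInvariantCR p g) (ha0 : 0 < a) (ha : a ≤ g.coeff u) :
    IsInvariantCR p (expandMonomial p u a g) where
  coeff_nonneg α := by
    classical
    rw [_root_.expandMonomial, coeff_add, coeff_sub, coeff_monomial, coeff_monomial_mul']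
    refine add_nonneg ?_ ?_
    · split_ifs with hu
      · exact sub_nonneg.mpr (hu ▸ ha)
      · simpa using hg.coeff_nonneg α
    · split_ifs
      · exact mul_nonneg ha0.le (coeff_sum_X_pow_nonneg p _)
      · exact le_rfl
  eval_eq_one x hx := by rw [eval_expandMonomial p u a g hx, hg.eval_eq_one x hx]
  dvd_degree α hα := by
    classical
    have hu : u ∈ g.support := mem_support_iff.mpr (ha0.trans_le ha).ne'
    rcases mem_union.mp (support_add hα) with hsub | hmul
    · rcases mem_union.mp (support_sub _ _ _ hsub) with hg' | hu'
      · exact hg.dvd_degree α hg'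
      · rw [mem_singleton.mp (support_monomial_subset hu')]
        exact hg.dvd_degree u hu
    · rw [degree_of_mem_support_monomial_mul_sum_X_pow ha0.ne' hmul]
      exact dvd_add (hg.dvd_degree u hu) dvd_rfl

lemma disjoint_support_sub_monomial_monomial_mul (hp : 0 < p)
    (htop : ∀ α ∈ g.support, α.degree ≤ u.degree) (ha : a ≠ 0) :
    Disjoint (g - monomial u a).support
      (monomial u a * (∑ i, X i : MvPolynomial σ ℝ) ^ p).support := by
  refine disjoint_left.mpr fun α hsub hmul => ?_
  have := degree_of_mem_support_monomial_mul_sum_X_pow ha hmul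
  have := degree_le_of_mem_support_sub_monomial htop hsub
  omega

lemma support_expandMonomial [DecidableEq σ] (hp : 0 < p)
    (htop : ∀ α ∈ g.support, α.degree ≤ u.degree) (ha : a ≠ 0) :
    (expandMonomial p u a g).support
      = (g - monomial u a).support ∪ (monomial u a * (∑ i, X i) ^ p).support :=
  Finsupp.support_add_eq (disjoint_support_sub_monomial_monomial_mul hp htop ha)

lemma card_support_expandMonomial [DecidableEq σ] (hp : 0 < p)
    (htop : ∀ α ∈ g.support, α.degree ≤ u.degree) (ha : a ≠ 0) :
    #(expandMonomial p u a g).support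
      = #(g - monomial u a).support + #((∑ i, X i : MvPolynomial σ ℝ) ^ p).support := by
  rw [support_expandMonomial hp htop ha,
    card_union_of_disjoint (disjoint_support_sub_monomial_monomial_mul hp htop ha),
    support_monomial_mul_sum_X_pow ha, card_map]

lemma IsTopMonomial.expandMonomial [DecidableEq σ] (hp : 0 < p) (h : IsTopMonomial g u)
    (ha : a ≠ 0) (i : σ) :
    IsTopMonomial (expandMonomial p u a g) (u + Finsupp.single i p) := by
  have hdeg : (u + Finsupp.single i p).degree = u.degree + p := by simp
  rw [IsTopMonomial, support_expandMonomial hp h.2 ha, hdeg]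
  constructor
  · refine mem_union_right _ ?_
    rw [support_monomial_mul_sum_X_pow ha]
    exact mem_map_of_mem _ (mem_support_sum_X_pow.mpr (Finsupp.degree_single i p))
  · intro α hα
    rcases mem_union.mp hα with hsub | hmul
    · exact (degree_le_of_mem_support_sub_monomial h.2 hsub).trans (Nat.le_add_right _ _)
    · exact (degree_of_mem_support_monomial_mul_sum_X_pow ha hmul).le

end ExpandMonomial

lemma exists_isInvariantCR_card_support [DecidableEq σ] {p : ℕ} (hp : 0 < p) (i : σ) :
    ∀ {K j : ℕ}, j ≤ K → ∃ g : MvPolynomial σ ℝ, ∃ u, IsInvariantCR p g ∧ IsTopMonomial g u ∧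
      #g.support = 1 + K * (#((∑ i, X i : MvPolynomial σ ℝ) ^ p).support - 1) + j
  | 0, j, hj => ⟨1, 0, isInvariantCR_one p, by simp [IsTopMonomial], by simp [Nat.le_zero.mp hj]⟩
  | K + 1, j, hj => by
    have hM : 1 ≤ #((∑ i, X i : MvPolynomial σ ℝ) ^ p).support :=
      card_pos.mpr ⟨_, mem_support_sum_X_pow.mpr (Finsupp.degree_single i p)⟩
    rcases Nat.le_add_one_iff.mp hj with hjK | rfl
    · obtain ⟨g, u, hg, htop, hcard⟩ := exists_isInvariantCR_card_support hp i hjK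
      have hc : 0 < g.coeff u := (hg.coeff_nonneg u).lt_of_ne' (mem_support_iff.mp htop.1)
      refine ⟨_, _, hg.expandMonomial hc le_rfl, htop.expandMonomial hp hc.ne' i, ?_⟩
      rw [card_support_expandMonomial hp htop.2 hc.ne', support_sub_monomial_coeff,
        card_erase_of_mem htop.1, hcard, add_one_mul]
      omega
    · obtain ⟨g, u, hg, htop, hcard⟩ := exists_isInvariantCR_card_support hp i (le_refl K)
      have hc : 0 < g.coeff u := (hg.coeff_nonneg u).lt_of_ne' (mem_support_iff.mp htop.1)
      have hc2 : 0 < g.coeff u / 2 := half_pos hc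
      refine ⟨_, _, hg.expandMonomial hc2 (half_le_self hc.le),
        htop.expandMonomial hp hc2.ne' i, ?_⟩
      rw [card_support_expandMonomial hp htop.2 hc2.ne',
        support_sub_monomial_of_ne (half_lt_self hc).ne, insert_eq_of_mem htop.1, hcard,
        add_one_mul]
      omega

lemma exists_eq_mul_add_of_sq_le {d n : ℕ} (h : d ^ 2 ≤ n) : ∃ K j, j ≤ K ∧ n = K * d + j := by
  rcases Nat.eq_zero_or_pos d with rfl | hd
  · exact ⟨n, n, le_rfl, by simp⟩
  refine ⟨n / d, n % d, ?_, (Nat.div_add_mod' n d).symm⟩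
  calc n % d ≤ d := (Nat.mod_lt n hd).le
    _ ≤ n / d := (Nat.le_div_iff_mul_le hd).mpr (by rwa [← sq])

lemma sub_one_sq_le_sub_one {M N : ℕ} (h : M ^ 2 - 2 * M + 2 ≤ N) : (M - 1) ^ 2 ≤ N - 1 := by
  rcases M with _ | k
  · simp
  · have : (k + 1) ^ 2 = k ^ 2 + 2 * k + 1 := by ring
    rw [Nat.add_sub_cancel]
    omega

/-- Gap termination for the group `⟨ω Iₙ⟩`: with `M = C(p+n-1, n-1)` the rank of
`(x₁ + ⋯ + xₙ)^p`, every `N ≥ M² - 2M + 2` is realized as the rank of an invariant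
polynomial with non-negative coefficients equal to `1` on the hyperplane `∑ xᵢ = 1`. -/
theorem stmt_2 (n p : ℕ) (hn : 2 ≤ n) (hp : 2 ≤ p) (N : ℕ)
    (hN : ((p + n - 1).choose (n - 1)) ^ 2 - 2 * ((p + n - 1).choose (n - 1)) + 2 ≤ N) :
    ∃ g : MvPolynomial (Fin n) ℝ,
      (∀ α, 0 ≤ g.coeff α) ∧
      (∀ x : Fin n → ℝ, (∑ i, x i) = 1 → eval x g = 1) ∧
      (∀ α ∈ g.support, p ∣ ∑ i, α i) ∧
      g.support.card = N := by
  set M := (p + n - 1).choose (n - 1)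
  have hM : #((∑ i, X i : MvPolynomial (Fin n) ℝ) ^ p).support = M := by
    rw [card_support_sum_X_pow, Fintype.card_fin, Nat.add_comm n p]
    exact Nat.choose_symm_of_eq_add (by omega)
  obtain ⟨K, j, hjK, hNKj⟩ := exists_eq_mul_add_of_sq_le (sub_one_sq_le_sub_one hN)
  obtain ⟨g, -, hg, -, hcard⟩ :=
    exists_isInvariantCR_card_support (by omega : 0 < p) (⟨0, by omega⟩ : Fin n) hjK
  refine ⟨g, hg.coeff_nonneg, hg.eval_eq_one, fun α hα => ?_, ?_⟩
  · rw [← Finsupp.degree_eq_sum]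
    exact hg.dvd_degree α hα
  · rw [hcard, hM]
    omega
end

section
/- Let n ≥ 1, let q ≥ 1 be an integer, let w ∈ ℕⁿ be a vector of weights, and let f ∈ ℝ[x₁,…,xₙ] be a polynomial with non-negative coefficients such that: f(x) = 1 whenever x₁ + ⋯ + xₙ = 1; the constant coefficient of f is zero; f has total degree p ≥ 1 and the coefficient of x₁^p in f is positive; every multi-index α in the support of f satisfies q ∣ (w₁α₁ + ⋯ + wₙαₙ); and the support of f has cardinality M ≥ 2. Then for every integer N ≥ M² − 2M + 2 there exists a polynomial g ∈ ℝ[x₁,…,xₙ] with non-negative coefficients such that g(x) = 1 whenever x₁ + ⋯ + xₙ = 1, every multi-index α in the support of g satisfies q ∣ (w₁α₁ + ⋯ + wₙαₙ), and the support of g has exactly N elements. -/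
open MvPolynomial

/-!
If `g` has non-negative coefficients, equals `1` on the hyperplane `∑ xᵢ = 1` and has invariant
support, then so does `g - d x^β + d x^β f` whenever `c x^β` is a monomial of `g` and `0 < d ≤ c`.
When `x^β` has top degree and `f(0) = 0`, the monomials `x^(β + γ)`, `γ ∈ supp f`, all have larger
degree than every monomial of `g`, so the rank grows by `M` if `d < c` and by `M - 1` if `d = c`.
Starting from `f`, every `M + a (M - 1) + b M` is therefore a rank, and by Sylvester's solution of
the postage stamp problem for the coprime pair `M - 1, M` this covers every `N ≥ M² - 2M + 2`.
-/

namespace MvPolynomial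

variable {σ R : Type*}

theorem support_add_of_disjoint [CommSemiring R] [DecidableEq σ] {p q : MvPolynomial σ R}
    (h : Disjoint p.support q.support) : (p + q).support = p.support ∪ q.support :=
  Finsupp.support_add_eq h

theorem support_monomial_mul [CommSemiring R] [NoZeroDivisors R] {β : σ →₀ ℕ} {d : R}
    (hd : d ≠ 0) (f : MvPolynomial σ R) :
    (monomial β d * f).support = f.support.map (addLeftEmbedding β) :=
  AddMonoidAlgebra.support_coeff_single_mul f d (fun _ => by simp [hd]) β

theorem exists_mem_support_degree_eq_totalDegree [CommSemiring R] {g : MvPolynomial σ R}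
    (hg : g ≠ 0) : ∃ β ∈ g.support, β.degree = g.totalDegree :=
  let ⟨β, hβ, h⟩ := Finset.exists_mem_eq_sup _ (support_nonempty.2 hg) Finsupp.degree
  ⟨β, hβ, h.symm⟩

theorem support_sub_monomial_coeff [CommRing R] [DecidableEq σ] (g : MvPolynomial σ R)
    (β : σ →₀ ℕ) : (g - monomial β (g.coeff β)).support = g.support.erase β := by
  ext α
  by_cases h : α = β
  · simp [h]
  · simp [h, coeff_monomial, Ne.symm h]

theorem support_sub_monomial_of_ne [CommRing R] {g : MvPolynomial σ R} {β : σ →₀ ℕ} {d : R}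
    (hβ : β ∈ g.support) (hd : d ≠ g.coeff β) : (g - monomial β d).support = g.support := by
  classical
  ext α
  by_cases h : α = β
  · subst h
    simpa [sub_eq_zero, hd.symm] using hβ
  · simp [coeff_monomial, Ne.symm h]

theorem disjoint_support_monomial_mul [CommSemiring R] {h f : MvPolynomial σ R}
    {β : σ →₀ ℕ} {d : R} (hf0 : f.coeff 0 = 0) (hh : ∀ α ∈ h.support, α.degree ≤ β.degree) :
    Disjoint h.support (monomial β d * f).support := by
  classical
  refine Finset.disjoint_left.2 fun α hα hα' => ?_
  obtain ⟨β', hβ', γ, hγ, rfl⟩ := Finset.mem_add.1 (support_mul _ _ hα')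
  rw [Finset.mem_singleton.1 (support_monomial_subset hβ')] at hα
  have hγ0 : γ.degree ≠ 0 := fun h0 => by
    rw [Finsupp.degree_eq_zero_iff] at h0
    simp [h0, hf0] at hγ
  have := hh _ hα
  rw [map_add] at this
  omega

theorem card_support_add_monomial_mul [CommSemiring R] [NoZeroDivisors R]
    {f h : MvPolynomial σ R} {β : σ →₀ ℕ} {d : R}
    (hd : d ≠ 0) (hf0 : f.coeff 0 = 0) (hh : ∀ α ∈ h.support, α.degree ≤ β.degree) :
    (h + monomial β d * f).support.card = h.support.card + f.support.card := by
  classical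
  have hdisj := disjoint_support_monomial_mul (d := d) hf0 hh
  rw [support_add_of_disjoint hdisj, Finset.card_union_of_disjoint hdisj,
    support_monomial_mul hd, Finset.card_map]

end MvPolynomial

theorem Nat.exists_mul_add_mul_succ_eq {m K : ℕ} (hm : 0 < m) (hK : m * (m - 1) ≤ K) :
    ∃ a b, a * m + b * (m + 1) = K := by
  have hr : K % m ≤ K / m := by
    have hq : m - 1 ≤ K / m := (Nat.le_div_iff_mul_le hm).2 (by rwa [mul_comm] at hK)
    have := Nat.mod_lt K hm
    omega
  refine ⟨K / m - K % m, K % m, ?_⟩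
  obtain ⟨a, ha⟩ := Nat.exists_eq_add_of_le hr
  have hK := Nat.div_add_mod K m
  rw [ha, Nat.add_sub_cancel_left]
  rw [ha] at hK
  linarith

variable {σ R : Type*} [Field R] [LinearOrder R] [IsStrictOrderedRing R]

structure IsAdmissible (X : Set (σ → R)) (A : AddSubmonoid (σ →₀ ℕ))
    (g : MvPolynomial σ R) : Prop where
  coeff_nonneg : ∀ α, 0 ≤ g.coeff α
  eval_eq_one : ∀ x ∈ X, eval x g = 1
  mem_of_mem_support : ∀ α ∈ g.support, α ∈ A

namespace IsAdmissible

variable {X : Set (σ → R)} {A : AddSubmonoid (σ →₀ ℕ)} {f g : MvPolynomial σ R}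

theorem sub_add_monomial_mul (hg : IsAdmissible X A g) (hf : IsAdmissible X A f)
    {β : σ →₀ ℕ} (hβ : β ∈ g.support) {d : R} (hd : 0 ≤ d) (hdc : d ≤ g.coeff β) :
    IsAdmissible X A (g - monomial β d + monomial β d * f) where
  coeff_nonneg α := by
    classical
    rw [coeff_add, coeff_sub, coeff_monomial, coeff_monomial_mul']
    refine add_nonneg ?_ ?_
    · split_ifs with h
      · exact sub_nonneg.2 (h ▸ hdc)
      · simpa using hg.coeff_nonneg α
    · split_ifs
      exacts [mul_nonneg hd (hf.coeff_nonneg _), le_rfl]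
  eval_eq_one x hx := by simp [hg.eval_eq_one x hx, hf.eval_eq_one x hx]
  mem_of_mem_support α hα := by
    classical
    rcases Finset.mem_union.1 (support_add hα) with hα | hα
    · rcases Finset.mem_union.1 (support_sub σ _ _ hα) with hα | hα
      · exact hg.mem_of_mem_support α hα
      · rw [Finset.mem_singleton.1 (support_monomial_subset hα)]
        exact hg.mem_of_mem_support β hβ
    · obtain ⟨β', hβ', γ, hγ, rfl⟩ := Finset.mem_add.1 (support_mul _ _ hα)
      rw [Finset.mem_singleton.1 (support_monomial_subset hβ')]
      exact A.add_mem (hg.mem_of_mem_support β hβ) (hf.mem_of_mem_support γ hγ)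

theorem exists_card_add (hg : IsAdmissible X A g) (hg0 : g ≠ 0) (hf : IsAdmissible X A f)
    (hf0 : f.coeff 0 = 0) :
    ∃ g', IsAdmissible X A g' ∧ g'.support.card = g.support.card + f.support.card := by
  obtain ⟨β, hβ, hdeg⟩ := exists_mem_support_degree_eq_totalDegree hg0
  obtain ⟨d, hd0, hdc⟩ := exists_between (lt_of_le_of_ne (hg.coeff_nonneg β)
    (Ne.symm (mem_support_iff.1 hβ)))
  have hsupp := support_sub_monomial_of_ne hβ hdc.ne
  have hβ_top : ∀ α ∈ (g - monomial β d).support, α.degree ≤ β.degree := by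
    rw [hsupp, hdeg]
    exact fun α => le_totalDegree
  refine ⟨_, hg.sub_add_monomial_mul hf hβ hd0.le hdc.le, ?_⟩
  rw [card_support_add_monomial_mul hd0.ne' hf0 hβ_top, hsupp]

theorem exists_card_add_sub_one (hg : IsAdmissible X A g) (hg0 : g ≠ 0)
    (hf : IsAdmissible X A f) (hf0 : f.coeff 0 = 0) :
    ∃ g', IsAdmissible X A g' ∧ g'.support.card + 1 = g.support.card + f.support.card := by
  classical
  obtain ⟨β, hβ, hdeg⟩ := exists_mem_support_degree_eq_totalDegree hg0
  have hsupp := support_sub_monomial_coeff g β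
  have hβ_top : ∀ α ∈ (g - monomial β (g.coeff β)).support, α.degree ≤ β.degree := by
    rw [hsupp, hdeg]
    exact fun α hα => le_totalDegree (Finset.mem_of_mem_erase hα)
  refine ⟨_, hg.sub_add_monomial_mul hf hβ (hg.coeff_nonneg β) le_rfl, ?_⟩
  rw [card_support_add_monomial_mul (mem_support_iff.1 hβ) hf0 hβ_top, hsupp,
    add_right_comm, Finset.card_erase_add_one hβ]

theorem exists_card_eq_add_mul (hg : IsAdmissible X A g) (hg0 : g ≠ 0)
    (hf : IsAdmissible X A f) (hf0 : f.coeff 0 = 0) {m : ℕ} (hfm : f.support.card = m + 1)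
    (a b : ℕ) :
    ∃ g', IsAdmissible X A g' ∧ g'.support.card = g.support.card + a * m + b * (m + 1) := by
  have hpos : 0 < g.support.card := Finset.card_pos.2 (support_nonempty.2 hg0)
  have ne_zero {g' : MvPolynomial σ R} (h : g.support.card ≤ g'.support.card) : g' ≠ 0 := by
    rintro rfl
    rw [support_zero, Finset.card_empty] at h
    omega
  induction a with
  | zero =>
    induction b with
    | zero => exact ⟨g, hg, by simp⟩
    | succ b ih =>
      obtain ⟨g', hg', hcard⟩ := ih
      obtain ⟨g'', hg'', hcard'⟩ := hg'.exists_card_add (ne_zero (by omega)) hf hf0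
      exact ⟨g'', hg'', by rw [hcard', hcard, hfm]; ring⟩
  | succ a ih =>
    obtain ⟨g', hg', hcard⟩ := ih
    obtain ⟨g'', hg'', hcard'⟩ :=
      hg'.exists_card_add_sub_one (ne_zero (by omega)) hf hf0
    rw [hcard, hfm] at hcard'
    exact ⟨g'', hg'', by linarith⟩

end IsAdmissible

/-- Exponents of the monomials invariant under `ℤ/q` acting diagonally with weights `w`. -/
def invariantExponents [Fintype σ] (q : ℕ) (w : σ → ℕ) : AddSubmonoid (σ →₀ ℕ) where
  carrier := {α | q ∣ ∑ i, w i * α i}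
  add_mem' {α β} hα hβ := by
    simpa only [Set.mem_ofPred_eq, Finsupp.add_apply, mul_add, Finset.sum_add_distrib]
      using dvd_add hα hβ
  zero_mem' := by simp

theorem stmt_3_general (n q : ℕ) (w : Fin n → ℕ)
    (f : MvPolynomial (Fin n) ℝ) (M : ℕ) (hM : 2 ≤ M)
    (hfnn : ∀ α, 0 ≤ f.coeff α)
    (hf1 : ∀ x : Fin n → ℝ, (∑ i, x i) = 1 → eval x f = 1)
    (hf0 : f.coeff 0 = 0)
    (hfdiv : ∀ α ∈ f.support, q ∣ ∑ i, w i * α i)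
    (hfcard : f.support.card = M)
    (N : ℕ) (hN : M ^ 2 - 2 * M + 2 ≤ N) :
    ∃ g : MvPolynomial (Fin n) ℝ,
      (∀ α, 0 ≤ g.coeff α) ∧
      (∀ x : Fin n → ℝ, (∑ i, x i) = 1 → eval x g = 1) ∧
      (∀ α ∈ g.support, q ∣ ∑ i, w i * α i) ∧
      g.support.card = N := by
  obtain ⟨m, rfl⟩ : ∃ m, M = m + 1 := ⟨M - 1, by omega⟩
  have hf : IsAdmissible {x | ∑ i, x i = 1} (invariantExponents q w) f := ⟨hfnn, hf1, hfdiv⟩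
  have hf_ne : f ≠ 0 := by
    rintro rfl
    simp at hfcard
  have hNm : m * (m - 1) + (m + 1) ≤ N := by
    obtain ⟨k, rfl⟩ : ∃ k, m = k + 1 := ⟨m - 1, by omega⟩
    have : (k + 1 + 1) ^ 2 = (k + 1) * k + 3 * k + 4 := by ring
    rw [Nat.add_sub_cancel]
    omega
  obtain ⟨a, b, hab⟩ :=
    Nat.exists_mul_add_mul_succ_eq (m := m) (K := N - (m + 1)) (by omega) (by omega)
  obtain ⟨g, hg, hcard⟩ := hf.exists_card_eq_add_mul hf_ne hf hf0 hfcard a b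
  exact ⟨g, hg.coeff_nonneg, hg.eval_eq_one, hg.mem_of_mem_support, by omega⟩

/-- General gap-termination theorem (Theorem 1 of the paper): given an invariant
polynomial `f` of rank `M ≥ 2` with the stated properties, every `N ≥ M² - 2M + 2`
is realized as the rank of an invariant polynomial with non-negative coefficients
that equals `1` on the hyperplane `∑ xᵢ = 1`. -/
theorem stmt_3 (n q : ℕ) (hn : 1 ≤ n) (hq : 1 ≤ q) (w : Fin n → ℕ)
    (f : MvPolynomial (Fin n) ℝ) (p M : ℕ) (hp : 1 ≤ p) (hM : 2 ≤ M)
    (hfnn : ∀ α, 0 ≤ f.coeff α)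
    (hf1 : ∀ x : Fin n → ℝ, (∑ i, x i) = 1 → eval x f = 1)
    (hf0 : f.coeff 0 = 0)
    (hfdeg : f.totalDegree = p)
    (hfpure : 0 < f.coeff (Finsupp.single ⟨0, hn⟩ p))
    (hfdiv : ∀ α ∈ f.support, q ∣ ∑ i, w i * α i)
    (hfcard : f.support.card = M)
    (N : ℕ) (hN : M ^ 2 - 2 * M + 2 ≤ N) :
    ∃ g : MvPolynomial (Fin n) ℝ,
      (∀ α, 0 ≤ g.coeff α) ∧
      (∀ x : Fin n → ℝ, (∑ i, x i) = 1 → eval x g = 1) ∧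
      (∀ α ∈ g.support, q ∣ ∑ i, w i * α i) ∧
      g.support.card = N :=
  stmt_3_general n q w f M hM hfnn hf1 hf0 hfdiv hfcard N hN
end

section
/- Let n ≥ 1 and let f, g ∈ ℝ[x₁,…,xₙ] be polynomials with non-negative coefficients such that f(x) = 1 and g(x) = 1 whenever x₁ + ⋯ + xₙ = 1. Suppose the constant coefficient of f is zero, f has total degree p ≥ 1 and the coefficient of x₁^p in f is positive, g has total degree d, and the coefficient c of x₁^d in g is positive. Define Vg = g + (c/2)·x₁^d·(f − 1). Then: Vg has non-negative coefficients; Vg(x) = 1 whenever x₁ + ⋯ + xₙ = 1; Vg has total degree d + p and the coefficient of x₁^{d+p} in Vg is positive; the support of Vg has cardinality equal to |support(g)| + |support(f)|; and, for any integer q ≥ 1 and weights w ∈ ℕⁿ, if every α in the support of f and every α in the support of g satisfies q ∣ (w₁α₁ + ⋯ + wₙαₙ), then so does every α in the support of Vg. -/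
open MvPolynomial

/-- The tensoring operator `V` from the proof of Theorem 1:
`Vg = g + (c/2)·x₁^d·(f − 1)` has non-negative coefficients, equals `1` on the
hyperplane, has total degree `d + p` with positive pure coefficient of `x₁^{d+p}`,
its rank is `rank(g) + rank(f)`, and it preserves weighted-congruence conditions
on the support. -/
theorem stmt_4 (n : ℕ) (hn : 1 ≤ n) (f g : MvPolynomial (Fin n) ℝ) (p d : ℕ) (hp : 1 ≤ p)
    (hfnn : ∀ α, 0 ≤ f.coeff α) (hgnn : ∀ α, 0 ≤ g.coeff α)
    (hf1 : ∀ x : Fin n → ℝ, (∑ i, x i) = 1 → eval x f = 1)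
    (hg1 : ∀ x : Fin n → ℝ, (∑ i, x i) = 1 → eval x g = 1)
    (hf0 : f.coeff 0 = 0)
    (hfdeg : f.totalDegree = p)
    (hfpure : 0 < f.coeff (Finsupp.single ⟨0, hn⟩ p))
    (hgdeg : g.totalDegree = d)
    (hgpure : 0 < g.coeff (Finsupp.single ⟨0, hn⟩ d)) :
    letI c : ℝ := g.coeff (Finsupp.single ⟨0, hn⟩ d)
    letI Vg : MvPolynomial (Fin n) ℝ := g + C (c / 2) * (X ⟨0, hn⟩) ^ d * (f - 1)
    (∀ α, 0 ≤ Vg.coeff α) ∧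
    (∀ x : Fin n → ℝ, (∑ i, x i) = 1 → eval x Vg = 1) ∧
    Vg.totalDegree = d + p ∧
    0 < Vg.coeff (Finsupp.single ⟨0, hn⟩ (d + p)) ∧
    Vg.support.card = g.support.card + f.support.card ∧
    (∀ (q : ℕ) (w : Fin n → ℕ), 1 ≤ q →
      (∀ α ∈ f.support, q ∣ ∑ i, w i * α i) →
      (∀ α ∈ g.support, q ∣ ∑ i, w i * α i) →
      ∀ α ∈ Vg.support, q ∣ ∑ i, w i * α i) := by
  set i0 : Fin n := ⟨0, hn⟩
  set m : Fin n →₀ ℕ := Finsupp.single i0 d with hm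
  set c : ℝ := g.coeff m with hc
  set Vg : MvPolynomial (Fin n) ℝ := g + C (c / 2) * (X i0) ^ d * (f - 1) with hVg
  have hc2 : 0 < c / 2 := by positivity
  have hmsupp : m ∈ g.support := MvPolynomial.mem_support_iff.mpr hgpure.ne'
  -- monomial form
  have hmono : C (c / 2) * (X i0 : MvPolynomial (Fin n) ℝ) ^ d = monomial m (c / 2) :=
    C_mul_X_pow_eq_monomial
  -- key coefficient formula
  have key : ∀ β, Vg.coeff β =
      g.coeff β + ((if m ≤ β then (c / 2) * f.coeff (β - m) else 0)
        - (if β = m then c / 2 else 0)) := by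
    intro β
    rw [hVg, coeff_add, mul_sub, mul_one, coeff_sub, hmono, coeff_monomial_mul',
      coeff_monomial]
    congr 2
    simp [eq_comm]
  -- degree helpers
  have hdm : m.sum (fun _ e => e) = d := Finsupp.sum_single_index rfl
  have hadd : ∀ a b : Fin n →₀ ℕ,
      (a + b).sum (fun _ e => e) = a.sum (fun _ e => e) + b.sum (fun _ e => e) :=
    fun a b => Finsupp.sum_add_index' (fun _ => rfl) (fun _ _ _ => rfl)
  have hpos1 : ∀ α : Fin n →₀ ℕ, α ≠ 0 → 1 ≤ α.sum (fun _ e => e) := by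
    intro α hα
    obtain ⟨i, hi⟩ := Finsupp.support_nonempty_iff.mpr hα
    calc 1 ≤ α i := Nat.one_le_iff_ne_zero.mpr (Finsupp.mem_support_iff.mp hi)
    _ ≤ α.sum (fun _ e => e) := Finset.single_le_sum (fun _ _ => Nat.zero_le _) hi
  have hfne : ∀ α ∈ f.support, α ≠ 0 := by
    intro α hα h0
    exact (MvPolynomial.mem_support_iff.mp hα) (h0 ▸ hf0)
  have hgle : ∀ β ∈ g.support, β.sum (fun _ e => e) ≤ d := fun β hβ => hgdeg ▸ le_totalDegree hβ
  have hfle : ∀ α ∈ f.support, α.sum (fun _ e => e) ≤ p := fun α hα => hfdeg ▸ le_totalDegree hα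
  -- coefficient computations
  have hA : Vg.coeff m = c / 2 := by
    rw [key]; simp [hf0, ← hc]; ring
  have hB : ∀ β ∈ g.support, β ≠ m → Vg.coeff β = g.coeff β := by
    intro β hβ hne
    rw [key, if_neg hne, sub_zero]
    by_cases hle : m ≤ β
    · exfalso
      have h1 : m + (β - m) = β := add_tsub_cancel_of_le hle
      have h2 : β - m ≠ 0 := by
        intro h0
        rw [h0, add_zero] at h1
        exact hne h1.symm
      have h3 := hgle β hβ
      rw [← h1, hadd, hdm] at h3
      have := hpos1 _ h2
      omega
    · rw [if_neg hle, add_zero]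
  have hC : ∀ α ∈ f.support, Vg.coeff (m + α) = (c / 2) * f.coeff α := by
    intro α hα
    have hαne := hfne α hα
    have hdegβ : (m + α).sum (fun _ e => e) = d + α.sum (fun _ e => e) := by rw [hadd, hdm]
    have hg0 : g.coeff (m + α) = 0 := by
      by_contra h
      have h1 := hgle _ (MvPolynomial.mem_support_iff.mpr h)
      rw [hdegβ] at h1
      have := hpos1 _ hαne
      omega
    have hnem : m + α ≠ m := by
      intro h
      apply hαne
      have : m + α = m + 0 := by rw [h, add_zero]
      exact add_left_cancel this
    rw [key, hg0, if_neg hnem, if_pos (le_add_right le_rfl), add_tsub_cancel_left]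
    ring
  have hO : ∀ β, β ∉ g.support → (∀ α ∈ f.support, β ≠ m + α) → Vg.coeff β = 0 := by
    intro β hβ hβf
    have hg0 : g.coeff β = 0 := MvPolynomial.notMem_support_iff.mp hβ
    have hnem : β ≠ m := fun h => hβ (h ▸ hmsupp)
    rw [key, hg0, if_neg hnem, sub_zero, zero_add]
    by_cases hle : m ≤ β
    · rw [if_pos hle]
      have h1 : m + (β - m) = β := add_tsub_cancel_of_le hle
      have h2 : β - m ∉ f.support := fun hmem => hβf _ hmem h1.symm
      rw [MvPolynomial.notMem_support_iff.mp h2, mul_zero]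
    · rw [if_neg hle]
  -- support characterization
  have hsupp : Vg.support = g.support ∪ f.support.map (addLeftEmbedding m) := by
    ext β
    rw [Finset.mem_union, Finset.mem_map]
    constructor
    · intro hβ
      by_contra hcon
      push_neg at hcon
      obtain ⟨h1, h2⟩ := hcon
      refine MvPolynomial.mem_support_iff.mp hβ (hO β h1 ?_)
      intro α hα heq
      exact h2 α hα (by rw [addLeftEmbedding_apply, ← heq])
    · rintro (hβ | ⟨α, hα, rfl⟩)
      · by_cases hne : β = m
        · subst hne
          exact MvPolynomial.mem_support_iff.mpr (by rw [hA]; exact hc2.ne')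
        · exact MvPolynomial.mem_support_iff.mpr
            (by rw [hB β hβ hne]; exact MvPolynomial.mem_support_iff.mp hβ)
      · rw [addLeftEmbedding_apply]
        refine MvPolynomial.mem_support_iff.mpr ?_
        rw [hC α hα]
        exact (mul_pos hc2 ((hfnn α).lt_of_ne
          (Ne.symm (MvPolynomial.mem_support_iff.mp hα)))).ne'
  have hdisj : Disjoint g.support (f.support.map (addLeftEmbedding m)) := by
    rw [Finset.disjoint_left]
    intro β hβ hβ'
    rw [Finset.mem_map] at hβ'
    obtain ⟨α, hα, rfl⟩ := hβ'
    rw [addLeftEmbedding_apply] at hβ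
    have h1 := hgle _ hβ
    rw [hadd, hdm] at h1
    have := hpos1 _ (hfne α hα)
    omega
  -- purity at d + p
  have hsingle : Finsupp.single i0 (d + p) = m + Finsupp.single i0 p := by
    rw [hm, Finsupp.single_add]
  have hfp : Finsupp.single i0 p ∈ f.support := MvPolynomial.mem_support_iff.mpr hfpure.ne'
  have hpure : 0 < Vg.coeff (Finsupp.single i0 (d + p)) := by
    rw [hsingle, hC _ hfp]
    exact mul_pos hc2 hfpure
  -- assemble
  refine ⟨?_, ?_, ?_, hpure, ?_, ?_⟩
  · -- nonnegativity
    intro β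
    by_cases hne : β = m
    · subst hne; rw [hA]; exact hc2.le
    · rw [key, if_neg hne, sub_zero]
      split_ifs with hle
      · exact add_nonneg (hgnn β) (mul_nonneg hc2.le (hfnn _))
      · rw [add_zero]; exact hgnn β
  · -- hyperplane
    intro x hx
    rw [hVg]
    simp [hg1 x hx, hf1 x hx]
  · -- total degree
    apply le_antisymm
    · rw [MvPolynomial.totalDegree]
      apply Finset.sup_le
      intro β hβ
      rw [hsupp, Finset.mem_union, Finset.mem_map] at hβ
      rcases hβ with hβ | ⟨α, hα, rfl⟩
      · exact le_trans (hgle β hβ) (Nat.le_add_right d p)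
      · rw [addLeftEmbedding_apply]
        show (m + α).sum (fun _ e => e) ≤ d + p
        rw [hadd, hdm]
        exact Nat.add_le_add_left (hfle α hα) d
    · have hs : (Finsupp.single i0 (d + p)).sum (fun _ e => e) = d + p :=
        Finsupp.sum_single_index rfl
      calc d + p = (Finsupp.single i0 (d + p)).sum (fun _ e => e) := hs.symm
        _ ≤ Vg.totalDegree := le_totalDegree (MvPolynomial.mem_support_iff.mpr hpure.ne')
  · -- rank
    rw [hsupp, Finset.card_union_of_disjoint hdisj, Finset.card_map]
  · -- congruence
    intro q w hq hfq hgq β hβ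
    rw [hsupp, Finset.mem_union, Finset.mem_map] at hβ
    rcases hβ with hβ | ⟨α, hα, rfl⟩
    · exact hgq β hβ
    · rw [addLeftEmbedding_apply]
      have hsplit : ∑ i, w i * (m + α) i = (∑ i, w i * m i) + ∑ i, w i * α i := by
        rw [← Finset.sum_add_distrib]
        exact Finset.sum_congr rfl fun i _ => by rw [Finsupp.add_apply, mul_add]
      rw [hsplit]
      exact dvd_add (hgq m hmsupp) (hfq α hα)
end

section
/- Let p ≥ 3 be an odd integer. For all real numbers x, y with x + y = 1, one has x^p + Σ_{k=1}^{(p−1)/2} (p/(p−k))·C(p−k, k)·x^{p−2k}·y^k + y^p = 1, where C(p−k, k) denotes a binomial coefficient. Moreover each coefficient c_k = (p/(p−k))·C(p−k, k) for 1 ≤ k ≤ (p−1)/2 is positive. -/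
/-!
The polynomial is the Dickson polynomial of the first kind `D_p(x, -y)`, i.e. the Lucas
sequence `L₀ = 2`, `L₁ = x`, `L_{n+2} = x L_{n+1} + y L_n`. It equals `u^p + v^p` whenever
`u + v = x` and `u v = -y`; on `x + y = 1` take `u = 1`, `v = -y`, so for odd `p` it equals
`1 - y^p`. The coefficients `p/(p-k) · C(p-k, k) = C(p-k, k) + C(p-k-1, k-1)` come from
`D_p = E_p + y E_{p-2}`, where the second-kind polynomials `E_n(x, -y) = ∑ C(n-k, k) x^(n-2k) y^k`
satisfy the same recurrence by Pascal's rule.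
-/

open Polynomial Finset

namespace Polynomial

variable {R : Type*} [CommRing R]

theorem dickson_one_eval_add_of_mul (u v : R) :
    ∀ n, (dickson 1 (u * v) n).eval (u + v) = u ^ n + v ^ n
  | 0 => by norm_num
  | 1 => by simp
  | n + 2 => by
    simp only [dickson_add_two, eval_sub, eval_mul, eval_X, eval_C,
      dickson_one_eval_add_of_mul u v n, dickson_one_eval_add_of_mul u v (n + 1)]
    ring

theorem dickson_one_add_two (a : R) :
    ∀ n, dickson 1 a (n + 2) = dickson 2 a (n + 2) - C a * dickson 2 a n
  | 0 => by simp; ring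
  | 1 => by simp; ring
  | n + 2 => by
    rw [dickson_add_two, dickson_one_add_two a (n + 1), dickson_one_add_two a n,
      dickson_add_two 2 a (n + 2), dickson_add_two 2 a (n + 1), dickson_add_two 2 a n]
    ring

end Polynomial

section FibTerm

variable {R : Type*} [CommRing R]

def fibTerm (x y : R) (n k : ℕ) : R := (n - k).choose k * x ^ (n - 2 * k) * y ^ k

variable (x y : R)

theorem fibTerm_zero_right (n : ℕ) : fibTerm x y n 0 = x ^ n := by
  simp [fibTerm]

theorem fibTerm_eq_zero {n k : ℕ} (h : n < 2 * k) : fibTerm x y n k = 0 := by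
  simp [fibTerm, Nat.choose_eq_zero_of_lt (by omega : n - k < k)]

theorem fibTerm_add_two_succ (n k : ℕ) :
    fibTerm x y (n + 2) (k + 1) = x * fibTerm x y (n + 1) (k + 1) + y * fibTerm x y n k := by
  rcases lt_or_ge n (2 * k) with h | h
  · simp [fibTerm_eq_zero x y h, fibTerm_eq_zero x y (by omega : n + 2 < 2 * (k + 1)),
      fibTerm_eq_zero x y (by omega : n + 1 < 2 * (k + 1))]
  unfold fibTerm
  rw [show n + 2 - (k + 1) = n - k + 1 by omega, Nat.choose_succ_succ',
    show n + 1 - (k + 1) = n - k by omega, show n + 2 - 2 * (k + 1) = n - 2 * k by omega]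
  rcases h.eq_or_lt with rfl | h
  · rw [Nat.choose_eq_zero_of_lt (by omega : 2 * k - k < k + 1)]
    push_cast; ring
  · rw [show n - 2 * k = n + 1 - 2 * (k + 1) + 1 by omega]
    push_cast; ring

theorem sum_range_fibTerm_eq_of_le {n m : ℕ} (h : n / 2 ≤ m) :
    ∑ k ∈ range (m + 1), fibTerm x y n k = ∑ k ∈ range (n / 2 + 1), fibTerm x y n k := by
  refine (sum_subset (range_subset_range.2 (by omega)) fun k _ hk => ?_).symm
  exact fibTerm_eq_zero x y (by simp at hk; omega)

theorem eval_dickson_two_neg :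
    ∀ n, (dickson 2 (-y) n).eval x = ∑ k ∈ range (n + 1), fibTerm x y n k
  | 0 => by simp [fibTerm]; norm_num
  | 1 => by simp [fibTerm, sum_range_succ]
  | n + 2 => by
    rw [dickson_add_two, eval_sub, eval_mul, eval_mul, eval_X, eval_C,
      eval_dickson_two_neg (n + 1), eval_dickson_two_neg n, sum_range_succ' _ (n + 2),
      sum_range_succ' _ (n + 1)]
    simp only [fibTerm_add_two_succ, sum_add_distrib, fibTerm_zero_right, ← mul_sum]
    rw [sum_range_succ _ (n + 1), sum_range_succ _ (n + 1), fibTerm_eq_zero x y (by omega),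
      fibTerm_eq_zero x y (by omega : n < 2 * (n + 1))]
    ring

end FibTerm

section Lucas

variable {K : Type*} [Field K] [CharZero K]

theorem sum_Icc_one_eq_sum_range {M : Type*} [AddCommMonoid M] (f : ℕ → M) (n : ℕ) :
    ∑ k ∈ Icc 1 n, f k = ∑ k ∈ range n, f (k + 1) := by
  rw [← Ico_add_one_right_eq_Icc, sum_Ico_eq_sum_range]
  simp only [add_tsub_cancel_right, add_comm 1]

theorem div_sub_mul_choose_eq {p k : ℕ} (hk : k + 1 < p) :
    (p : K) / ((p : K) - ((k + 1 : ℕ) : K)) * ((p - (k + 1)).choose (k + 1) : K) =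
      ((p - (k + 1)).choose (k + 1) : K) + ((p - (k + 2)).choose k : K) := by
  obtain ⟨m, rfl⟩ : ∃ m, p = m + k + 2 := ⟨p - (k + 2), by omega⟩
  rw [show m + k + 2 - (k + 1) = m + 1 by omega, show m + k + 2 - (k + 2) = m by omega]
  have hpascal :
      ((m + 1 : ℕ) : K) * (m.choose k : K) = ((m + 1).choose (k + 1) : K) * (k + 1 : ℕ) := by
    exact_mod_cast Nat.add_one_mul_choose_eq m k
  have hsub : ((m + k + 2 : ℕ) : K) - ((k + 1 : ℕ) : K) = ((m + 1 : ℕ) : K) := by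
    push_cast; ring
  rw [hsub]
  field_simp
  push_cast at hpascal ⊢
  linear_combination -hpascal

theorem eval_dickson_one_neg (x y : K) {p : ℕ} (hp : 1 ≤ p) :
    (dickson 1 (-y) p).eval x =
      x ^ p + ∑ k ∈ Icc 1 (p / 2),
        (p : K) / ((p : K) - (k : K)) * ((p - k).choose k : K) * x ^ (p - 2 * k) * y ^ k := by
  rcases hp.eq_or_lt with rfl | hp
  · simp
  obtain ⟨n, rfl⟩ : ∃ n, p = n + 2 := ⟨p - 2, by omega⟩
  have hterm : ∀ k ∈ range ((n + 2) / 2),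
      ((n + 2 : ℕ) : K) / ((n + 2 : ℕ) - ((k + 1 : ℕ) : K)) *
        ((n + 2 - (k + 1)).choose (k + 1) : K) * x ^ (n + 2 - 2 * (k + 1)) * y ^ (k + 1) =
      fibTerm x y (n + 2) (k + 1) + y * fibTerm x y n k := by
    intro k hk
    rw [mem_range] at hk
    rw [div_sub_mul_choose_eq (by omega), fibTerm, fibTerm,
      show n + 2 - (k + 2) = n - k by omega, show n + 2 - 2 * (k + 1) = n - 2 * k by omega]
    ring
  rw [dickson_one_add_two, eval_sub, eval_mul, eval_C, eval_dickson_two_neg, eval_dickson_two_neg,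
    sum_range_fibTerm_eq_of_le x y (by omega : (n + 2) / 2 ≤ n + 2),
    sum_range_fibTerm_eq_of_le x y (by omega : n / 2 ≤ n),
    sum_range_succ', fibTerm_zero_right, sum_Icc_one_eq_sum_range, sum_congr rfl hterm,
    sum_add_distrib, ← mul_sum, show (n + 2) / 2 = n / 2 + 1 by omega]
  ring

end Lucas

theorem stmt_6_general (p : ℕ) (hodd : Odd p) :
    (∀ x y : ℝ, x + y = 1 →
      x ^ p +
        (∑ k ∈ Finset.Icc 1 ((p - 1) / 2),
          ((p : ℝ) / ((p : ℝ) - (k : ℝ)) * ((p - k).choose k : ℝ)) * x ^ (p - 2 * k) * y ^ k) +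
        y ^ p = 1) ∧
    (∀ k : ℕ, 1 ≤ k → k ≤ (p - 1) / 2 →
      0 < (p : ℝ) / ((p : ℝ) - (k : ℝ)) * ((p - k).choose k : ℝ)) := by
  have hhalf : (p - 1) / 2 = p / 2 := by obtain ⟨t, rfl⟩ := hodd; omega
  refine ⟨fun x y hxy => ?_, fun k hk1 hk2 => ?_⟩
  · have h := dickson_one_eval_add_of_mul (1 : ℝ) (-y) p
    rw [one_mul, ← sub_eq_add_neg, ← eq_sub_of_add_eq hxy, eval_dickson_one_neg x y hodd.pos,
      one_pow, hodd.neg_pow] at h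
    rw [hhalf]
    linarith
  · have hkp : (k : ℝ) < p := by exact_mod_cast (by omega : k < p)
    have hchoose : 0 < (p - k).choose k := Nat.choose_pos (by omega)
    exact mul_pos (div_pos (by linarith) (by linarith)) (by exact_mod_cast hchoose)

/-- The canonical polynomial `f_{p,2}` for `Γ(p,2)` equals `1` on the line
`x + y = 1`, and all its coefficients `c_k = (p/(p−k))·C(p−k,k)` are positive. -/
theorem stmt_6 (p : ℕ) (hp : 3 ≤ p) (hodd : Odd p) :
    (∀ x y : ℝ, x + y = 1 →
      x ^ p +
        (∑ k ∈ Finset.Icc 1 ((p - 1) / 2),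
          ((p : ℝ) / ((p : ℝ) - (k : ℝ)) * ((p - k).choose k : ℝ)) * x ^ (p - 2 * k) * y ^ k) +
        y ^ p = 1) ∧
    (∀ k : ℕ, 1 ≤ k → k ≤ (p - 1) / 2 →
      0 < (p : ℝ) / ((p : ℝ) - (k : ℝ)) * ((p - k).choose k : ℝ)) :=
  stmt_6_general p hodd
end

section
/- Let p ≥ 2 be an integer and define g₁(x,y) = (x+y)^p + x^p·((x+y)^p − 1) ∈ ℝ[x,y]. Then g₁ has non-negative coefficients, g₁(x,y) = 1 whenever x + y = 1, every pair (a,b) in the support of g₁ satisfies p ∣ a + b, and the support of g₁ has exactly 2p + 1 elements. -/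
open MvPolynomial Finset

noncomputable def ee (a b : ℕ) : Fin 2 →₀ ℕ := Finsupp.single 0 a + Finsupp.single 1 b

lemma ee0 (a b : ℕ) : ee a b 0 = a := by simp [ee]
lemma ee1 (a b : ℕ) : ee a b 1 = b := by simp [ee]

lemma ee_inj {a b a' b' : ℕ} (h : ee a b = ee a' b') : a = a' ∧ b = b' :=
  ⟨by rw [← ee0 a b, h, ee0], by rw [← ee1 a b, h, ee1]⟩

lemma hbin (p : ℕ) : (X 0 + X 1 : MvPolynomial (Fin 2) ℝ)^p
    = ∑ k ∈ range (p+1), monomial (ee k (p-k)) ((p.choose k : ℝ)) := by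
  rw [add_pow]
  refine Finset.sum_congr rfl fun k hk => ?_
  rw [X_pow_eq_monomial, X_pow_eq_monomial, monomial_mul, one_mul,
    ← map_natCast (C : ℝ →+* MvPolynomial (Fin 2) ℝ), mul_comm, C_mul_monomial, mul_one]
  rfl

lemma hrepr (p : ℕ) :
    ((X 0 + X 1 : MvPolynomial (Fin 2) ℝ)^p + (X 0)^p * ((X 0 + X 1)^p - 1)) =
    ∑ k ∈ range p, monomial (ee k (p-k)) ((p.choose k : ℝ))
    + ∑ k ∈ range (p+1), monomial (ee (p+k) (p-k)) ((p.choose k : ℝ)) := by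
  have h2 : ∀ k, monomial (Finsupp.single (0 : Fin 2) p) (1:ℝ) * monomial (ee k (p-k)) ((p.choose k : ℝ))
      = monomial (ee (p+k) (p-k)) ((p.choose k : ℝ)) := by
    intro k
    rw [monomial_mul, one_mul]
    congr 1
    simp only [ee, Finsupp.single_add]
    abel
  have h4 : ∑ k ∈ range (p+1), monomial (ee k (p-k)) ((p.choose k : ℝ))
      = ∑ k ∈ range p, monomial (ee k (p-k)) ((p.choose k : ℝ))
        + monomial (Finsupp.single (0:Fin 2) p) (1:ℝ) := by
    rw [Finset.sum_range_succ, Nat.sub_self, Nat.choose_self]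
    simp [ee]
  rw [hbin, mul_sub, mul_one, Finset.mul_sum, X_pow_eq_monomial]
  simp only [h2]
  rw [h4]
  ring

lemma hcoeff (p : ℕ) (α : Fin 2 →₀ ℕ) :
    coeff α ((X 0 + X 1 : MvPolynomial (Fin 2) ℝ)^p + (X 0)^p * ((X 0 + X 1)^p - 1)) =
    (∑ k ∈ range p, if ee k (p-k) = α then (p.choose k : ℝ) else 0)
    + ∑ k ∈ range (p+1), if ee (p+k) (p-k) = α then (p.choose k : ℝ) else 0 := by
  rw [hrepr, coeff_add, coeff_sum, coeff_sum]
  simp only [coeff_monomial]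

lemma hsupp (p : ℕ) (hp : 2 ≤ p) :
    ((X 0 + X 1 : MvPolynomial (Fin 2) ℝ)^p + (X 0)^p * ((X 0 + X 1)^p - 1)).support =
    ((range p).image fun k => ee k (p-k)) ∪ ((range (p+1)).image fun k => ee (p+k) (p-k)) := by
  ext α
  rw [mem_support_iff, hcoeff]
  constructor
  · intro h
    by_contra hA
    simp only [Finset.mem_union, Finset.mem_image, Finset.mem_range, not_or, not_exists] at hA
    apply h
    rw [Finset.sum_eq_zero, Finset.sum_eq_zero, add_zero]
    · intro k hk
      rw [if_neg]
      intro he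
      exact hA.2 k ⟨Finset.mem_range.mp hk, he⟩
    · intro k hk
      rw [if_neg]
      intro he
      exact hA.1 k ⟨Finset.mem_range.mp hk, he⟩
  · intro hA
    simp only [Finset.mem_union, Finset.mem_image, Finset.mem_range] at hA
    rcases hA with ⟨k₀, hk₀, he⟩ | ⟨k₀, hk₀, he⟩
    · rw [Finset.sum_eq_single_of_mem k₀ (Finset.mem_range.mpr hk₀),
        Finset.sum_eq_zero, if_pos he, add_zero]
      · exact Nat.cast_ne_zero.mpr (Nat.choose_pos hk₀.le).ne'
      · intro k hk
        rw [if_neg]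
        intro h
        have := (ee_inj (h.trans he.symm)).1
        omega
      · intro k hk hne
        rw [if_neg]
        intro h
        exact hne (ee_inj (h.trans he.symm)).1
    · have hk₀' : k₀ ≤ p := by omega
      rw [Finset.sum_eq_single_of_mem k₀ (Finset.mem_range.mpr hk₀),
        Finset.sum_eq_zero, if_pos he, zero_add]
      · exact Nat.cast_ne_zero.mpr (Nat.choose_pos hk₀').ne'
      · intro k hk
        rw [if_neg]
        intro h
        have := (ee_inj (h.trans he.symm)).1
        have := Finset.mem_range.mp hk
        omega
      · intro k hk hne
        rw [if_neg]
        intro h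
        have := (ee_inj (h.trans he.symm)).1
        omega

/-- The polynomial `g₁ = (x+y)^p + x^p·((x+y)^p − 1)` has non-negative coefficients,
equals `1` on the line `x + y = 1`, is `Γ(p,1)`-invariant (`p ∣ a + b` on its
support), and has rank `2p + 1`. -/
theorem stmt_7 (p : ℕ) (hp : 2 ≤ p) :
    letI g1 : MvPolynomial (Fin 2) ℝ :=
      (X 0 + X 1) ^ p + (X 0) ^ p * ((X 0 + X 1) ^ p - 1)
    (∀ α, 0 ≤ g1.coeff α) ∧
    (∀ x y : ℝ, x + y = 1 → eval ![x, y] g1 = 1) ∧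
    (∀ α ∈ g1.support, p ∣ α 0 + α 1) ∧
    g1.support.card = 2 * p + 1 := by
  refine ⟨?_, ?_, ?_, ?_⟩
  · intro α
    rw [hcoeff]
    apply add_nonneg <;> refine Finset.sum_nonneg fun k hk => ?_ <;> split <;> positivity
  · intro x y h
    simp only [map_add, map_mul, map_pow, map_sub, map_one, eval_X,
      Matrix.cons_val_zero, Matrix.cons_val_one, Matrix.head_cons]
    rw [h]
    ring
  · intro α hα
    rw [hsupp p hp] at hα
    simp only [Finset.mem_union, Finset.mem_image, Finset.mem_range] at hα
    rcases hα with ⟨k, hk, he⟩ | ⟨k, hk, he⟩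
    · rw [← he, ee0, ee1]
      exact ⟨1, by omega⟩
    · rw [← he, ee0, ee1]
      exact ⟨2, by omega⟩
  · rw [hsupp p hp, Finset.card_union_of_disjoint, Finset.card_image_of_injOn,
      Finset.card_image_of_injOn, Finset.card_range, Finset.card_range]
    · ring
    · intro a _ b _ h
      have h2 := (ee_inj h).1
      omega
    · intro a _ b _ h
      have h2 := (ee_inj h).1
      omega
    · rw [Finset.disjoint_left]
      rintro α hα₁ hα₂
      simp only [Finset.mem_image, Finset.mem_range] at hα₁ hα₂
      obtain ⟨a, ha, hea⟩ := hα₁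
      obtain ⟨b, hb, heb⟩ := hα₂
      have := (ee_inj (hea.trans heb.symm)).1
      omega
end

section
/- Let p ≥ 2 be an integer, let g₁(x,y) = (x+y)^p + x^p·((x+y)^p − 1), and for an integer j with 2 ≤ j ≤ p define g_j(x,y) = g₁(x,y) + C(p,j)·x^{p−j}·y^j·((x+y)^p − 1) ∈ ℝ[x,y], where C(p,j) is a binomial coefficient. Then g_j has non-negative coefficients, g_j(x,y) = 1 whenever x + y = 1, every pair (a,b) in the support of g_j satisfies p ∣ a + b, and the support of g_j has exactly 2p + j elements. -/
open MvPolynomial Finset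

lemma ee_add (a b a' b' : ℕ) : ee a b + ee a' b' = ee (a+a') (b+b') := by
  simp [ee, Finsupp.single_add]; abel

lemma ee_zero (a : ℕ) : ee a 0 = Finsupp.single 0 a := by simp [ee]

lemma Xmono (a b : ℕ) : (X 0:MvPolynomial (Fin 2) ℝ)^a * (X 1)^b = monomial (ee a b) 1 := by
  simp [X_pow_eq_monomial, monomial_mul, ee]

lemma expandA (p : ℕ) : ((X 0 + X 1 : MvPolynomial (Fin 2) ℝ))^p
    = ∑ i ∈ Finset.range (p+1), monomial (ee i (p - i)) ((p.choose i : ℝ)) := by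
  rw [add_pow]
  apply Finset.sum_congr rfl; intro i hi
  rw [show ((p.choose i : MvPolynomial (Fin 2) ℝ)) = C ((p.choose i : ℝ)) by simp,
    Xmono, mul_comm _ (C _), C_mul_monomial, mul_one]

lemma expandB (p : ℕ) : (X 0:MvPolynomial (Fin 2) ℝ)^p * (X 0 + X 1)^p
    = ∑ a ∈ Finset.Icc p (2*p), monomial (ee a (2*p - a)) ((p.choose (a - p) : ℝ)) := by
  rw [expandA, Finset.mul_sum, ← Finset.Ico_add_one_right_eq_Icc, Finset.sum_Ico_eq_sum_range,
    show 2*p+1-p = p+1 by omega]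
  apply Finset.sum_congr rfl; intro i hi
  rw [show (X 0:MvPolynomial (Fin 2) ℝ)^p = monomial (ee p 0) 1 by
      rw [← Xmono p 0, pow_zero, mul_one],
    monomial_mul, ee_add, one_mul,
    show p+i-p = i by omega, show 2*p-(p+i) = 0+(p-i) by omega]

lemma expandC (p j : ℕ) (hj : j ≤ p) :
    C ((p.choose j : ℝ)) * (X 0:MvPolynomial (Fin 2) ℝ)^(p-j) * (X 1)^j * (X 0 + X 1)^p
    = ∑ a ∈ Finset.Icc (p-j) (2*p-j),
        monomial (ee a (2*p - a)) ((p.choose j : ℝ) * (p.choose (a - (p-j)) : ℝ)) := by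
  rw [expandA, mul_assoc (C _), Xmono, C_mul_monomial, mul_one, Finset.mul_sum,
    ← Finset.Ico_add_one_right_eq_Icc, Finset.sum_Ico_eq_sum_range, show 2*p-j+1-(p-j) = p+1 by omega]
  apply Finset.sum_congr rfl; intro i hi
  simp only [Finset.mem_range] at hi
  rw [monomial_mul, ee_add,
    show p-j+i-(p-j) = i by omega, show 2*p-(p-j+i) = j+(p-i) by omega]

/-- coefficient function for the degree-2p part -/
noncomputable def c2 (p j a : ℕ) : ℝ :=
  (if p ≤ a then (p.choose (a - p) : ℝ) else 0)
  + (if a ≤ 2*p - j then (p.choose j : ℝ) * (p.choose (a - (p-j)) : ℝ) else 0)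

lemma main_eq (p j : ℕ) (hp : 2 ≤ p) (hj1 : 2 ≤ j) (hj2 : j ≤ p) :
    ((X 0 + X 1 : MvPolynomial (Fin 2) ℝ)) ^ p + (X 0) ^ p * ((X 0 + X 1) ^ p - 1)
      + C ((p.choose j : ℝ)) * (X 0) ^ (p - j) * (X 1) ^ j * ((X 0 + X 1) ^ p - 1)
    = (∑ i ∈ ((Finset.range (p+1)).erase p).erase (p-j),
          monomial (ee i (p-i)) ((p.choose i : ℝ)))
      + ∑ a ∈ Finset.Icc (p-j) (2*p), monomial (ee a (2*p-a)) (c2 p j a) := by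
  have h1 : ((X 0 + X 1 : MvPolynomial (Fin 2) ℝ))^p
      = monomial (ee p 0) 1 + monomial (ee (p-j) j) ((p.choose j : ℝ))
        + ∑ i ∈ ((Finset.range (p+1)).erase p).erase (p-j),
            monomial (ee i (p-i)) ((p.choose i : ℝ)) := by
    rw [expandA]
    have hmp : p ∈ Finset.range (p+1) := by simp
    have hm2 : p - j ∈ (Finset.range (p+1)).erase p := by
      simp [Finset.mem_erase]; omega
    rw [← Finset.add_sum_erase _ _ hmp, ← Finset.add_sum_erase _ _ hm2, ← add_assoc]
    congr 2
    · rw [Nat.sub_self, Nat.choose_self, Nat.cast_one]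
    · rw [Nat.choose_symm hj2, show p - (p-j) = j by omega]
  have h2 : (∑ a ∈ Finset.Icc p (2*p),
          monomial (ee a (2*p - a)) ((p.choose (a - p) : ℝ)))
      + (∑ a ∈ Finset.Icc (p-j) (2*p-j),
          monomial (ee a (2*p - a)) ((p.choose j : ℝ) * (p.choose (a - (p-j)) : ℝ)))
      = ∑ a ∈ Finset.Icc (p-j) (2*p), monomial (ee a (2*p-a)) (c2 p j a) := by
    have e1 : Finset.Icc p (2*p) = (Finset.Icc (p-j) (2*p)).filter (fun a => p ≤ a) := by
      ext a; simp [Finset.mem_filter]; omega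
    have e2 : Finset.Icc (p-j) (2*p-j)
        = (Finset.Icc (p-j) (2*p)).filter (fun a => a ≤ 2*p - j) := by
      ext a; simp [Finset.mem_filter]; omega
    rw [e1, e2, Finset.sum_filter, Finset.sum_filter, ← Finset.sum_add_distrib]
    apply Finset.sum_congr rfl; intro a ha
    rw [c2, map_add]
    congr 1 <;> split <;> simp
  calc ((X 0 + X 1 : MvPolynomial (Fin 2) ℝ)) ^ p + (X 0) ^ p * ((X 0 + X 1) ^ p - 1)
      + C ((p.choose j : ℝ)) * (X 0) ^ (p - j) * (X 1) ^ j * ((X 0 + X 1) ^ p - 1)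
      = (X 0 + X 1) ^ p + ((X 0) ^ p * (X 0 + X 1) ^ p
          + C ((p.choose j : ℝ)) * (X 0) ^ (p - j) * (X 1) ^ j * (X 0 + X 1) ^ p)
        - ((X 0)^p + C ((p.choose j : ℝ)) * (X 0) ^ (p - j) * (X 1) ^ j) := by ring
    _ = _ := by
        rw [expandB, expandC p j hj2, h1, h2,
          show (X 0:MvPolynomial (Fin 2) ℝ)^p = monomial (ee p 0) 1 by
            rw [← Xmono p 0, pow_zero, mul_one],
          show C ((p.choose j : ℝ)) * (X 0:MvPolynomial (Fin 2) ℝ)^(p-j) * (X 1)^j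
              = monomial (ee (p-j) j) ((p.choose j : ℝ)) by
            rw [mul_assoc, Xmono, C_mul_monomial, mul_one]]
        abel

lemma coeff_sum_monomial (S : Finset (Fin 2 →₀ ℕ)) (c : (Fin 2 →₀ ℕ) → ℝ) (m : Fin 2 →₀ ℕ) :
    coeff m (∑ k ∈ S, monomial k (c k)) = if m ∈ S then c m else 0 := by
  rw [MvPolynomial.coeff_sum]
  simp [coeff_monomial, Finset.sum_ite_eq' S m c]

noncomputable def ccf (p j : ℕ) (m : Fin 2 →₀ ℕ) : ℝ :=
  (if m 0 + m 1 = p then (p.choose (m 0) : ℝ) else 0)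
  + (if m 0 + m 1 = 2*p then c2 p j (m 0) else 0)

lemma c2_nonneg (p j a : ℕ) : 0 ≤ c2 p j a := by
  unfold c2
  apply add_nonneg <;> split <;> positivity

lemma ccf_nonneg (p j : ℕ) (m : Fin 2 →₀ ℕ) : 0 ≤ ccf p j m := by
  unfold ccf
  apply add_nonneg <;> split
  · positivity
  · exact le_refl 0
  · exact c2_nonneg p j (m 0)
  · exact le_refl 0

lemma c2_pos (p j a : ℕ) (hj1 : 2 ≤ j) (hj2 : j ≤ p) (ha1 : p - j ≤ a) (ha2 : a ≤ 2*p) :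
    0 < c2 p j a := by
  unfold c2
  by_cases h : p ≤ a
  · apply add_pos_of_pos_of_nonneg
    · rw [if_pos h]
      exact_mod_cast Nat.choose_pos (by omega)
    · split <;> positivity
  · apply add_pos_of_nonneg_of_pos
    · split <;> positivity
    · rw [if_pos (by omega)]
      have h1 : 0 < (p.choose j : ℝ) := by exact_mod_cast Nat.choose_pos hj2
      have h2 : 0 < (p.choose (a - (p-j)) : ℝ) := by
        exact_mod_cast Nat.choose_pos (by omega)
      exact mul_pos h1 h2

lemma ccf_T1 (p j i : ℕ) (hp : 1 ≤ p) (hi : i ≤ p) :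
    ccf p j (ee i (p - i)) = (p.choose i : ℝ) := by
  unfold ccf
  rw [ee0, ee1, if_pos (by omega), if_neg (by omega), add_zero]

lemma ccf_T2 (p j a : ℕ) (hp : 1 ≤ p) (ha : a ≤ 2*p) :
    ccf p j (ee a (2*p - a)) = c2 p j a := by
  unfold ccf
  rw [ee0, ee1, if_neg (by omega), if_pos (by omega), zero_add]

/-- For `2 ≤ j ≤ p`, the polynomial
`g_j = g₁ + C(p,j)·x^{p−j}·y^j·((x+y)^p − 1)` (with `g₁ = (x+y)^p + x^p·((x+y)^p − 1)`)
has non-negative coefficients, equals `1` on `x + y = 1`, is `Γ(p,1)`-invariant,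
and has rank `2p + j`. -/
theorem stmt_8 (p j : ℕ) (hp : 2 ≤ p) (hj1 : 2 ≤ j) (hj2 : j ≤ p) :
    letI g1 : MvPolynomial (Fin 2) ℝ :=
      (X 0 + X 1) ^ p + (X 0) ^ p * ((X 0 + X 1) ^ p - 1)
    letI gj : MvPolynomial (Fin 2) ℝ :=
      g1 + C ((p.choose j : ℝ)) * (X 0) ^ (p - j) * (X 1) ^ j * ((X 0 + X 1) ^ p - 1)
    (∀ α, 0 ≤ gj.coeff α) ∧
    (∀ x y : ℝ, x + y = 1 → eval ![x, y] gj = 1) ∧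
    (∀ α ∈ gj.support, p ∣ α 0 + α 1) ∧
    gj.support.card = 2 * p + j := by
  have hp1 : 1 ≤ p := by omega
  set S1 : Finset ℕ := ((Finset.range (p+1)).erase p).erase (p-j) with hS1
  set S2 : Finset ℕ := Finset.Icc (p-j) (2*p) with hS2
  set T1 : Finset (Fin 2 →₀ ℕ) := S1.image (fun i => ee i (p-i)) with hT1def
  set T2 : Finset (Fin 2 →₀ ℕ) := S2.image (fun a => ee a (2*p-a)) with hT2def
  have hmemS1 : ∀ i ∈ S1, i ≤ p := by
    intro i hi
    simp only [hS1, Finset.mem_erase, Finset.mem_range] at hi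
    omega
  have hmemS2 : ∀ a ∈ S2, p - j ≤ a ∧ a ≤ 2*p := by
    intro a ha
    simpa [hS2, Finset.mem_Icc] using ha
  have hT1 : ∑ m ∈ T1, monomial m (ccf p j m)
      = ∑ i ∈ S1, monomial (ee i (p-i)) ((p.choose i : ℝ)) := by
    rw [hT1def, Finset.sum_image (fun i hi i' hi' h => (ee_inj h).1)]
    exact Finset.sum_congr rfl fun i hi => by rw [ccf_T1 p j i hp1 (hmemS1 i hi)]
  have hT2 : ∑ m ∈ T2, monomial m (ccf p j m)
      = ∑ a ∈ S2, monomial (ee a (2*p-a)) (c2 p j a) := by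
    rw [hT2def, Finset.sum_image (fun i hi i' hi' h => (ee_inj h).1)]
    exact Finset.sum_congr rfl fun a ha => by rw [ccf_T2 p j a hp1 (hmemS2 a ha).2]
  have hdisj : Disjoint T1 T2 := by
    rw [Finset.disjoint_left]
    rintro m hm1 hm2
    obtain ⟨i, hi, rfl⟩ := Finset.mem_image.mp hm1
    obtain ⟨a, ha, h⟩ := Finset.mem_image.mp hm2
    have h1 := (ee_inj h).1
    have h2 := (ee_inj h).2
    have hi' := hmemS1 i hi
    have ha' := hmemS2 a ha
    omega
  have hE : ((X 0 + X 1 : MvPolynomial (Fin 2) ℝ)) ^ p + (X 0) ^ p * ((X 0 + X 1) ^ p - 1)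
      + C ((p.choose j : ℝ)) * (X 0) ^ (p - j) * (X 1) ^ j * ((X 0 + X 1) ^ p - 1)
      = ∑ m ∈ T1 ∪ T2, monomial m (ccf p j m) := by
    rw [Finset.sum_union hdisj, hT1, hT2]
    exact main_eq p j hp hj1 hj2
  have hsupp : (((X 0 + X 1 : MvPolynomial (Fin 2) ℝ)) ^ p + (X 0) ^ p * ((X 0 + X 1) ^ p - 1)
      + C ((p.choose j : ℝ)) * (X 0) ^ (p - j) * (X 1) ^ j
        * ((X 0 + X 1) ^ p - 1)).support = T1 ∪ T2 := by
    ext m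
    rw [mem_support_iff, hE, coeff_sum_monomial]
    constructor
    · intro h
      by_contra hm
      rw [if_neg hm] at h
      exact h rfl
    · intro hm
      rw [if_pos hm]
      rcases Finset.mem_union.mp hm with h | h
      · obtain ⟨i, hi, rfl⟩ := Finset.mem_image.mp h
        rw [ccf_T1 p j i hp1 (hmemS1 i hi)]
        exact_mod_cast (Nat.choose_pos (hmemS1 i hi)).ne'
      · obtain ⟨a, ha, rfl⟩ := Finset.mem_image.mp h
        rw [ccf_T2 p j a hp1 (hmemS2 a ha).2]
        exact (c2_pos p j a hj1 hj2 (hmemS2 a ha).1 (hmemS2 a ha).2).ne'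
  refine ⟨?_, ?_, ?_, ?_⟩
  · intro α
    rw [hE, coeff_sum_monomial]
    split
    · exact ccf_nonneg p j α
    · exact le_refl 0
  · intro x y h
    simp only [map_add, map_sub, map_mul, map_pow, map_one, eval_C, eval_X,
      Matrix.cons_val_zero, Matrix.cons_val_one, Matrix.head_cons]
    rw [h]
    ring
  · intro α hα
    rw [hsupp] at hα
    rcases Finset.mem_union.mp hα with h | h
    · obtain ⟨i, hi, rfl⟩ := Finset.mem_image.mp h
      rw [ee0, ee1]
      exact ⟨1, by have := hmemS1 i hi; omega⟩
    · obtain ⟨a, ha, rfl⟩ := Finset.mem_image.mp h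
      rw [ee0, ee1]
      exact ⟨2, by have := hmemS2 a ha; omega⟩
  · rw [hsupp, Finset.card_union_of_disjoint hdisj,
      Finset.card_image_of_injOn (fun i hi i' hi' h => (ee_inj h).1),
      Finset.card_image_of_injOn (fun i hi i' hi' h => (ee_inj h).1)]
    have hmp : p ∈ Finset.range (p+1) := by simp
    have hm2 : p - j ∈ (Finset.range (p+1)).erase p := by
      simp [Finset.mem_erase]
      omega
    rw [hS1, hS2, Finset.card_erase_of_mem hm2, Finset.card_erase_of_mem hmp,
      Finset.card_range, Nat.card_Icc]
    omega
end

section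
/- Let p ≥ 3 be an odd integer, let f_{p,2}(x,y) = x^p + Σ_{k=1}^{(p−1)/2} c_k x^{p−2k} y^k + y^p with c_k = (p/(p−k))·C(p−k, k), let g₁(x,y) = f_{p,2}(x,y) + x^p·(f_{p,2}(x,y) − 1), and for an integer j with 1 ≤ j ≤ (p−1)/2 define g_{j+1}(x,y) = g₁(x,y) + c_j·x^{p−2j}·y^j·(f_{p,2}(x,y) − 1) ∈ ℝ[x,y]. Then g_{j+1} has non-negative coefficients, g_{j+1}(x,y) = 1 whenever x + y = 1, every pair (a,b) in the support of g_{j+1} satisfies p ∣ a + 2b, and the support of g_{j+1} has exactly p + 2 + j elements. -/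
open MvPolynomial Finset

/-!
The coefficients `c_k = p/(p-k) C(p-k,k)` are the natural numbers `C(p-k,k) + C(p-k-1,k-1)` of
Waring's formula `a^p + b^p = ∑ c_k (a + b)^(p-2k) (-ab)^k`. Taking `a = 1`, `b = x - 1` gives
`f(x, 1 - x) = 1 + (x - 1)^p + (1 - x)^p = 1` for odd `p`, so `g = f + (x^p + c_j x^(p-2j) y^j)(f - 1)`
is `1` on the line `x + y = 1` as well.

Written as `(f - x^p - c_j x^(p-2j) y^j) + (x^p + c_j x^(p-2j) y^j) f`, the polynomial `g` has natural
coefficients, so nothing cancels and its support is the union of the supports of the products.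
A monomial `x^a y^b` occurring in it has weighted degree `a + 2b ∈ {p, 2p, 3p}` and is determined by
`(a + 2b, b)`. With `m = (p - 1)/2`, weight `p` contributes `b ∈ [1, m] \ {j}`, weight `2p`
contributes `b ∈ [0, m + j] ∪ {p}` and weight `3p` contributes `b ∈ {p, p + j}`: in total
`(m - 1) + (m + j + 2) + 2 = p + 2 + j` monomials.
-/

def dicksonCoeff (n k : ℕ) : ℕ :=
  if k = 0 then 1 else (n - k).choose k + (n - 1 - k).choose (k - 1)

namespace dicksonCoeff

@[simp] lemma zero_right (n : ℕ) : dicksonCoeff n 0 = 1 := rfl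

lemma add_succ_succ (s k : ℕ) :
    dicksonCoeff (s + (k + 1)) (k + 1) = s.choose (k + 1) + (s - 1).choose k := by
  rw [dicksonCoeff, if_neg k.succ_ne_zero, Nat.add_sub_cancel, Nat.add_sub_cancel,
    show s + (k + 1) - 1 - (k + 1) = s - 1 by omega]

lemma pos {n k : ℕ} (h : 2 * k ≤ n) : 0 < dicksonCoeff n k := by
  unfold dicksonCoeff
  split_ifs
  · exact Nat.one_pos
  · exact Nat.add_pos_left (Nat.choose_pos (by omega)) _

lemma eq_zero {n k : ℕ} (hn : 1 ≤ n) (h : n ≤ 2 * k) : dicksonCoeff (n + 1) (k + 1) = 0 := by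
  rw [dicksonCoeff, if_neg k.succ_ne_zero, Nat.choose_eq_zero_of_lt (by omega),
    Nat.choose_eq_zero_of_lt (by omega)]

lemma add_two {n k : ℕ} (h : 2 * k ≤ n) :
    dicksonCoeff (n + 2) (k + 1) = dicksonCoeff (n + 1) (k + 1) + dicksonCoeff n k := by
  rcases k with _ | k
  · simp [dicksonCoeff]
  obtain ⟨t, rfl⟩ : ∃ t, n = t + 1 + (k + 1) := ⟨n - k - 2, by omega⟩
  rw [show t + 1 + (k + 1) + 2 = t + 1 + 1 + (k + 1 + 1) by omega,
    show t + 1 + (k + 1) + 1 = t + 1 + (k + 1 + 1) by omega, add_succ_succ, add_succ_succ,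
    add_succ_succ, Nat.add_sub_cancel, Nat.add_sub_cancel, Nat.choose_succ_succ' (t + 1),
    Nat.choose_succ_succ' t k]
  ring

lemma cast_eq {K : Type*} [Field K] [CharZero K] {n k : ℕ} (hk : k < n) :
    (dicksonCoeff n k : K) = n / (n - k) * (n - k).choose k := by
  rcases k with _ | k
  · simp [div_self (Nat.cast_ne_zero.2 hk.ne' : (n : K) ≠ 0)]
  obtain ⟨s, rfl⟩ : ∃ s, n = s + 1 + (k + 1) := ⟨n - k - 2, by omega⟩
  have hnat : dicksonCoeff (s + 1 + (k + 1)) (k + 1) * (s + 1) =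
      (s + 1 + (k + 1)) * (s + 1).choose (k + 1) := by
    rw [add_succ_succ, Nat.add_sub_cancel, add_mul, mul_comm (s.choose k),
      Nat.add_one_mul_choose_eq]
    ring
  have hsub : ((s + 1 + (k + 1) : ℕ) : K) - ((k + 1 : ℕ) : K) = (s + 1 : ℕ) := by
    push_cast
    ring
  rw [Nat.add_sub_cancel, hsub, div_mul_eq_mul_div,
    eq_div_iff (Nat.cast_ne_zero.2 s.succ_ne_zero)]
  exact_mod_cast hnat

end dicksonCoeff

section Waring

variable {R : Type*}

def dicksonSum [CommSemiring R] (n : ℕ) (s q : R) : R :=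
  ∑ k ∈ range (n / 2 + 1), (dicksonCoeff n k : R) * s ^ (n - 2 * k) * q ^ k

lemma dicksonSum_add_two [CommSemiring R] {n : ℕ} (hn : 1 ≤ n) (s q : R) :
    dicksonSum (n + 2) s q = s * dicksonSum (n + 1) s q + q * dicksonSum n s q := by
  -- the terms `k ≥ (n + 1) / 2` added on the left vanish by `dicksonCoeff.eq_zero`
  have shifted :
      ∑ k ∈ range (n / 2 + 1), (dicksonCoeff (n + 1) (k + 1) : R) * s ^ (n - 2 * k) * q ^ (k + 1) =
        s * ∑ k ∈ range ((n + 1) / 2),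
          (dicksonCoeff (n + 1) (k + 1) : R) * s ^ (n + 1 - 2 * (k + 1)) * q ^ (k + 1) := by
    rw [mul_sum, ← sum_subset (range_subset_range.2 (by omega : (n + 1) / 2 ≤ n / 2 + 1))]
    · refine sum_congr rfl fun k hk => ?_
      rw [show n - 2 * k = n + 1 - 2 * (k + 1) + 1 by grind, pow_succ]
      ring
    · intro k _ hk
      rw [mem_range, not_lt] at hk
      rw [dicksonCoeff.eq_zero hn (by omega), Nat.cast_zero, zero_mul, zero_mul]
  unfold dicksonSum
  rw [show (n + 2) / 2 + 1 = n / 2 + 1 + 1 by omega, sum_range_succ',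
    sum_range_succ' _ ((n + 1) / 2), mul_add, ← shifted, mul_sum, add_right_comm,
    ← sum_add_distrib]
  congr 1
  · refine sum_congr rfl fun k hk => ?_
    rw [dicksonCoeff.add_two (by grind), show n + 2 - 2 * (k + 1) = n - 2 * k by omega]
    push_cast
    ring
  · simp only [dicksonCoeff.zero_right, Nat.cast_one, mul_zero, Nat.sub_zero, pow_zero]
    ring

theorem pow_add_pow_eq_dicksonSum [CommRing R] (a b : R) {n : ℕ} (hn : 1 ≤ n) :
    a ^ n + b ^ n = dicksonSum n (a + b) (-(a * b)) := by
  induction n using Nat.strong_induction_on with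
  | _ n ih =>
    match n, hn with
    | 1, _ => simp [dicksonSum]
    | 2, _ =>
      simp [dicksonSum, sum_range_succ, dicksonCoeff]
      ring
    | n + 3, _ =>
      rw [dicksonSum_add_two (by omega), ← ih (n + 2) (by omega) (by omega),
        ← ih (n + 1) (by omega) (by omega)]
      ring

end Waring

section WeightedExp

/-- The exponent of `x ^ (d - 2 * b) * y ^ b`; for `2 * b ≤ d` this monomial has weighted degree
`d` when `x` has weight `1` and `y` has weight `2`. -/
noncomputable def weightedExp (d b : ℕ) : Fin 2 →₀ ℕ :=
  Finsupp.single 0 (d - 2 * b) + Finsupp.single 1 b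

variable {d d' b b' : ℕ}

@[simp] lemma weightedExp_apply_zero : weightedExp d b 0 = d - 2 * b := by simp [weightedExp]

@[simp] lemma weightedExp_apply_one : weightedExp d b 1 = b := by simp [weightedExp]

lemma weightedExp_injective (d : ℕ) : Function.Injective (weightedExp d) := fun b b' h => by
  simpa using DFunLike.congr_fun h 1

lemma weightedExp_add (hb : 2 * b ≤ d) (hb' : 2 * b' ≤ d') :
    weightedExp d b + weightedExp d' b' = weightedExp (d + d') (b + b') := by
  ext i
  fin_cases i <;> simp; omega

lemma weight_weightedExp (hb : 2 * b ≤ d) : weightedExp d b 0 + 2 * weightedExp d b 1 = d := by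
  simp only [weightedExp_apply_zero, weightedExp_apply_one]
  omega

lemma disjoint_image_weightedExp (hd : d ≠ d') {s t : Finset ℕ} (hs : ∀ b ∈ s, 2 * b ≤ d)
    (ht : ∀ b ∈ t, 2 * b ≤ d') :
    Disjoint (s.image (weightedExp d)) (t.image (weightedExp d')) := by
  simp only [disjoint_left, mem_image, not_exists, not_and]
  rintro _ ⟨b, hb, rfl⟩ b' hb' h
  exact hd (by rw [← weight_weightedExp (hs b hb), ← h, weight_weightedExp (ht b' hb')])

variable {R : Type*} [CommSemiring R]

lemma C_mul_X_pow_mul_X_pow (r : R) (d b : ℕ) :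
    C r * X 0 ^ (d - 2 * b) * X 1 ^ b = monomial (weightedExp d b) r := by
  rw [X_pow_eq_monomial, X_pow_eq_monomial, C_mul_monomial, monomial_mul, mul_one, mul_one]
  rfl

lemma eval_monomial_weightedExp (v : Fin 2 → R) (r : R) (d b : ℕ) :
    eval v (monomial (weightedExp d b) r) = r * v 0 ^ (d - 2 * b) * v 1 ^ b := by
  simp [← C_mul_X_pow_mul_X_pow]

end WeightedExp

namespace MvPolynomial

variable {σ R ι : Type*} [DecidableEq σ] [CommSemiring R] [PartialOrder R]
  [CanonicallyOrderedAdd R]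

lemma support_add_eq_union (P Q : MvPolynomial σ R) :
    (P + Q).support = P.support ∪ Q.support := by
  ext α
  simp only [mem_support_iff, coeff_add, mem_union, ne_eq, add_eq_zero, not_and_or]

lemma support_sum_monomial_eq_image (s : Finset ι) (e : ι → σ →₀ ℕ) {r : ι → R}
    (hr : ∀ i ∈ s, r i ≠ 0) : (∑ i ∈ s, monomial (e i) (r i)).support = s.image e := by
  classical
  induction s using Finset.induction_on with
  | empty => simp
  | insert i s hi ih =>
    rw [sum_insert hi, support_add_eq_union, ih fun i h => hr i (mem_insert_of_mem h),
      support_monomial, if_neg (hr i (mem_insert_self i s)), image_insert, insert_eq]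

end MvPolynomial

lemma range_union_image_add {m j : ℕ} (hj : j ≤ m + 1) :
    range (m + 1) ∪ (range (m + 1)).image (j + ·) = range (m + j + 1) := by
  ext l
  simp only [mem_union, mem_range, mem_image]
  constructor
  · rintro (h | ⟨k, hk, rfl⟩) <;> omega
  · intro h
    by_cases hl : l < m + 1
    · exact Or.inl hl
    · exact Or.inr ⟨l - j, by omega, by omega⟩

section CanonicalPoly

variable (R : Type*) [CommSemiring R]

noncomputable def dicksonForm (n : ℕ) : MvPolynomial (Fin 2) R :=
  ∑ k ∈ range (n / 2 + 1), monomial (weightedExp n k) (dicksonCoeff n k : R)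

noncomputable def canonicalPoly (p : ℕ) : MvPolynomial (Fin 2) R :=
  dicksonForm R p + monomial (weightedExp (2 * p) p) 1

/-- The paper's `g_{j+1}`, written so that it has natural coefficients when `R = ℕ`
(see `perturbedCanonicalPoly_eq`). -/
noncomputable def perturbedCanonicalPoly (p j : ℕ) : MvPolynomial (Fin 2) R :=
  (∑ k ∈ (Icc 1 (p / 2)).erase j, monomial (weightedExp p k) (dicksonCoeff p k : R)) +
    monomial (weightedExp (2 * p) p) 1 +
    (monomial (weightedExp p 0) 1 + monomial (weightedExp p j) (dicksonCoeff p j : R)) *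
      canonicalPoly R p

variable {R}

lemma eval_dicksonForm (v : Fin 2 → R) (n : ℕ) :
    eval v (dicksonForm R n) = dicksonSum n (v 0) (v 1) := by
  simp [dicksonForm, dicksonSum, eval_monomial_weightedExp]

lemma dicksonForm_eq_add_sum_Icc (n : ℕ) :
    dicksonForm R n = monomial (weightedExp n 0) 1 +
      ∑ k ∈ Icc 1 (n / 2), monomial (weightedExp n k) (dicksonCoeff n k : R) := by
  have hrange : range (n / 2 + 1) = insert 0 (Icc 1 (n / 2)) := by
    ext k
    simp only [mem_range, mem_insert, mem_Icc]
    omega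
  rw [dicksonForm, hrange, sum_insert (by simp), dicksonCoeff.zero_right, Nat.cast_one]

lemma monomial_weightedExp_mul_dicksonForm {p b : ℕ} (hb : 2 * b ≤ p) (r : R) :
    monomial (weightedExp p b) r * dicksonForm R p =
      ∑ k ∈ range (p / 2 + 1), monomial (weightedExp (2 * p) (b + k)) (r * dicksonCoeff p k) := by
  rw [dicksonForm, mul_sum]
  refine sum_congr rfl fun k hk => ?_
  rw [monomial_mul, weightedExp_add hb (by grind), two_mul]

lemma map_perturbedCanonicalPoly {S : Type*} [CommSemiring S] (φ : R →+* S) (p j : ℕ) :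
    map φ (perturbedCanonicalPoly R p j) = perturbedCanonicalPoly S p j := by
  simp [perturbedCanonicalPoly, canonicalPoly, dicksonForm]

end CanonicalPoly

section CanonicalPolyRing

variable {R : Type*} [CommRing R]

lemma eval_canonicalPoly {p : ℕ} (hp : Odd p) {v : Fin 2 → R} (hv : v 0 + v 1 = 1) :
    eval v (canonicalPoly R p) = 1 := by
  have hv1 : v 1 = -(1 * (v 0 - 1)) := by linear_combination hv
  have waring := pow_add_pow_eq_dicksonSum (1 : R) (v 0 - 1) hp.pos
  rw [add_sub_cancel, ← hv1] at waring
  rw [canonicalPoly, map_add, eval_dicksonForm, eval_monomial_weightedExp, ← waring, hv1,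
    Nat.sub_self, pow_zero, hp.neg_pow]
  ring

lemma perturbedCanonicalPoly_eq {p j : ℕ} (hj : j ∈ Icc 1 (p / 2)) :
    perturbedCanonicalPoly R p j = canonicalPoly R p +
      (monomial (weightedExp p 0) 1 + monomial (weightedExp p j) (dicksonCoeff p j : R)) *
        (canonicalPoly R p - 1) := by
  rw [perturbedCanonicalPoly, canonicalPoly, dicksonForm_eq_add_sum_Icc, ← add_sum_erase _ _ hj]
  ring

end CanonicalPolyRing

section CanonicalPolyField

variable {K : Type*} [Field K] [CharZero K]

lemma canonicalPoly_eq {p : ℕ} (hp : 0 < p) :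
    canonicalPoly K p = X 0 ^ p + (∑ k ∈ Icc 1 (p / 2),
      C ((p : K) / (p - k) * (p - k).choose k) * X 0 ^ (p - 2 * k) * X 1 ^ k) + X 1 ^ p := by
  rw [canonicalPoly, dicksonForm_eq_add_sum_Icc]
  congr 2
  · simpa using (C_mul_X_pow_mul_X_pow (1 : K) p 0).symm
  · refine sum_congr rfl fun k hk => ?_
    rw [C_mul_X_pow_mul_X_pow, dicksonCoeff.cast_eq (by grind)]
  · simpa using (C_mul_X_pow_mul_X_pow (1 : K) (2 * p) p).symm

lemma map_natCast_perturbedCanonicalPoly {p j : ℕ} (hj : j ∈ Icc 1 (p / 2)) :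
    map (Nat.castRingHom K) (perturbedCanonicalPoly ℕ p j) =
      canonicalPoly K p + X 0 ^ p * (canonicalPoly K p - 1) +
        C ((p : K) / (p - j) * (p - j).choose j) * X 0 ^ (p - 2 * j) * X 1 ^ j *
          (canonicalPoly K p - 1) := by
  rw [map_perturbedCanonicalPoly, perturbedCanonicalPoly_eq hj, C_mul_X_pow_mul_X_pow,
    ← dicksonCoeff.cast_eq (by grind), ← C_mul_X_pow_mul_X_pow (1 : K) p 0, map_one,
    Nat.sub_zero, pow_zero, mul_one]
  ring

end CanonicalPolyField

section Support

variable {p j : ℕ}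

lemma support_perturbedCanonicalPoly (hj : j ≤ p / 2) :
    (perturbedCanonicalPoly ℕ p j).support =
      ((Icc 1 (p / 2)).erase j).image (weightedExp p) ∪
        (insert p (range (p / 2 + j + 1))).image (weightedExp (2 * p)) ∪
        ({p, j + p} : Finset ℕ).image (weightedExp (3 * p)) := by
  have hne : ∀ k, 2 * k ≤ p → dicksonCoeff p k ≠ 0 := fun k hk => (dicksonCoeff.pos hk).ne'
  rw [perturbedCanonicalPoly, canonicalPoly, mul_add, add_mul, add_mul,
    monomial_weightedExp_mul_dicksonForm (Nat.zero_le _),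
    monomial_weightedExp_mul_dicksonForm (by omega), monomial_mul, monomial_mul,
    weightedExp_add (Nat.zero_le p) le_rfl, weightedExp_add (by omega : 2 * j ≤ p) le_rfl]
  simp only [support_add_eq_union, Nat.cast_id, one_mul, mul_one, zero_add,
    show p + 2 * p = 3 * p by ring]
  rw [support_sum_monomial_eq_image, support_sum_monomial_eq_image,
    support_sum_monomial_eq_image]
  · simp only [support_monomial, one_ne_zero, if_false, hne j (by omega)]
    rw [← range_union_image_add (by omega : j ≤ p / 2 + 1), image_insert, image_union,
      image_image, insert_eq, insert_eq, image_union, image_singleton, image_singleton,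
      Function.comp_def]
    ac_rfl
  all_goals
    intro k hk
    simp only [mem_range, mem_erase, mem_Icc] at hk
    first
      | exact hne k (by omega)
      | exact mul_ne_zero (hne j (by omega)) (hne k (by omega))

lemma dvd_of_mem_support_perturbedCanonicalPoly (hj : j ≤ p / 2) {α : Fin 2 →₀ ℕ}
    (hα : α ∈ (perturbedCanonicalPoly ℕ p j).support) : p ∣ α 0 + 2 * α 1 := by
  rw [support_perturbedCanonicalPoly hj] at hα
  simp only [mem_union, mem_image, mem_erase, mem_Icc, mem_insert, mem_range,
    mem_singleton] at hα
  rcases hα with (⟨b, hb, rfl⟩ | ⟨b, hb, rfl⟩) | ⟨b, hb, rfl⟩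
  · rw [weight_weightedExp (by omega)]
  · rw [weight_weightedExp (by omega)]
    exact dvd_mul_left p 2
  · rw [weight_weightedExp (by omega)]
    exact dvd_mul_left p 3

lemma card_support_perturbedCanonicalPoly (hp : Odd p) (hj1 : 1 ≤ j) (hj : j ≤ p / 2) :
    (perturbedCanonicalPoly ℕ p j).support.card = p + 2 + j := by
  obtain ⟨m, rfl⟩ := hp
  have hm : (2 * m + 1) / 2 = m := by omega
  rw [support_perturbedCanonicalPoly hj, card_union_of_disjoint, card_union_of_disjoint,
    card_image_of_injective _ (weightedExp_injective _),
    card_image_of_injective _ (weightedExp_injective _),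
    card_image_of_injective _ (weightedExp_injective _), card_erase_of_mem (by simp; omega),
    Nat.card_Icc, card_insert_of_notMem (by simp; omega), card_range, card_pair (by omega), hm]
  · omega
  all_goals
    try rw [disjoint_union_left]; constructor
  all_goals
    refine disjoint_image_weightedExp (by omega) (fun b hb => ?_) (fun b hb => ?_) <;>
      simp only [mem_erase, mem_Icc, mem_insert, mem_range, mem_singleton] at hb <;> omega

end Support

theorem stmt_10_general (p j : ℕ) (hodd : Odd p)
    (hj1 : 1 ≤ j) (hj2 : j ≤ (p - 1) / 2) :
    letI c : ℕ → ℝ := fun k => (p : ℝ) / ((p : ℝ) - (k : ℝ)) * ((p - k).choose k : ℝ)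
    letI f : MvPolynomial (Fin 2) ℝ :=
      (X 0) ^ p + (∑ k ∈ Finset.Icc 1 ((p - 1) / 2),
        C (c k) * (X 0) ^ (p - 2 * k) * (X 1) ^ k) + (X 1) ^ p
    letI g1 : MvPolynomial (Fin 2) ℝ := f + (X 0) ^ p * (f - 1)
    letI gj : MvPolynomial (Fin 2) ℝ :=
      g1 + C (c j) * (X 0) ^ (p - 2 * j) * (X 1) ^ j * (f - 1)
    (∀ α, 0 ≤ gj.coeff α) ∧
    (∀ x y : ℝ, x + y = 1 → eval ![x, y] gj = 1) ∧
    (∀ α ∈ gj.support, p ∣ α 0 + 2 * α 1) ∧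
    gj.support.card = p + 2 + j := by
  have hm : (p - 1) / 2 = p / 2 := by
    obtain ⟨t, rfl⟩ := hodd
    omega
  have hj : j ≤ p / 2 := hm ▸ hj2
  beta_reduce
  rw [hm, ← canonicalPoly_eq hodd.pos,
    ← map_natCast_perturbedCanonicalPoly (mem_Icc.2 ⟨hj1, hj⟩),
    support_map_of_injective _ Nat.cast_injective]
  refine ⟨fun α => ?_, fun x y hxy => ?_,
    fun α hα => dvd_of_mem_support_perturbedCanonicalPoly hj hα,
    card_support_perturbedCanonicalPoly hodd hj1 hj⟩
  · rw [coeff_map]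
    exact Nat.cast_nonneg _
  · have hv : ![x, y] 0 + ![x, y] 1 = 1 := hxy
    rw [map_perturbedCanonicalPoly, perturbedCanonicalPoly_eq (mem_Icc.2 ⟨hj1, hj⟩), map_add,
      map_mul, map_sub, map_one (eval ![x, y]), eval_canonicalPoly hodd hv, sub_self,
      mul_zero, add_zero]

/-- For `1 ≤ j ≤ (p−1)/2`, the polynomial
`g_{j+1} = g₁ + c_j·x^{p−2j}·y^j·(f_{p,2} − 1)` (with `g₁ = f_{p,2} + x^p·(f_{p,2} − 1)`)
has non-negative coefficients, equals `1` on `x + y = 1`, is `Γ(p,2)`-invariant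
(`p ∣ a + 2b` on its support), and has rank `p + 2 + j`. -/
theorem stmt_10 (p j : ℕ) (hp : 3 ≤ p) (hodd : Odd p)
    (hj1 : 1 ≤ j) (hj2 : j ≤ (p - 1) / 2) :
    letI c : ℕ → ℝ := fun k => (p : ℝ) / ((p : ℝ) - (k : ℝ)) * ((p - k).choose k : ℝ)
    letI f : MvPolynomial (Fin 2) ℝ :=
      (X 0) ^ p + (∑ k ∈ Finset.Icc 1 ((p - 1) / 2),
        C (c k) * (X 0) ^ (p - 2 * k) * (X 1) ^ k) + (X 1) ^ p
    letI g1 : MvPolynomial (Fin 2) ℝ := f + (X 0) ^ p * (f - 1)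
    letI gj : MvPolynomial (Fin 2) ℝ :=
      g1 + C (c j) * (X 0) ^ (p - 2 * j) * (X 1) ^ j * (f - 1)
    (∀ α, 0 ≤ gj.coeff α) ∧
    (∀ x y : ℝ, x + y = 1 → eval ![x, y] gj = 1) ∧
    (∀ α ∈ gj.support, p ∣ α 0 + 2 * α 1) ∧
    gj.support.card = p + 2 + j :=
  stmt_10_general p j hodd hj1 hj2
end
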